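/- arXiv:2202.04463 — 9 statements merged into one kernel-verified Lean document; each statement's English description precedes it below -/
import Mathlib

section
/- Let I ⊆ Σ and suppose w ∈ W_I satisfies w(I) = −I (as subsets of V). Then the map −w (i.e. x ↦ −w(x)) restricts to a permutation of the finite set I, and the dimension of the eigenspace of w for the eigenvalue −1 equals the number of orbits of this permutation of I. -/
/-!
Write `M` for the span of `I`. Since `w(I) = -I`, `w` preserves `M`, and as a product of
reflections in roots of `I` it fixes `Mᗮ` pointwise. So if `w x = -x` and `x = y + z` with
`y ∈ M`, `z ∈ Mᗮ`, then `2z = -(w y + y) ∈ M ∩ Mᗮ`, and `x ∈ M`. Since `I` is linearly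
independent, a vector `∑ cᵢ i` of `M` satisfies `w x = -x` iff its coefficient function is
invariant under `σ = -w|_I`, i.e. constant on the `σ`-orbits. So the orbit sums form a basis
of the eigenspace.
-/

open Module Module.End Submodule Set MulAction

theorem Equiv.Perm.apply_zpow_apply_eq {ι β : Type*} {σ : Equiv.Perm ι} {c : ι → β}
    (hc : ∀ i, c (σ i) = c i) (n : ℤ) (i : ι) : c ((σ ^ n) i) = c i := by
  induction n using Int.induction_on generalizing i with
  | zero => rfl
  | succ n ih => rw [zpow_add_one, Equiv.Perm.mul_apply, ih, hc]
  | pred n ih =>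
    rw [zpow_sub_one, Equiv.Perm.mul_apply, ih, ← hc, Equiv.Perm.inv_def, Equiv.apply_symm_apply]

theorem Equiv.Perm.exists_eq_comp_orbitRel_mk {ι β : Type*} {σ : Equiv.Perm ι} {c : ι → β}
    (hc : ∀ i, c (σ i) = c i) :
    ∃ d : orbitRel.Quotient (Subgroup.zpowers σ) ι → β, c = d ∘ Quotient.mk'' := by
  refine ⟨Quotient.lift c ?_, rfl⟩
  rintro i j ⟨⟨g, hg⟩, rfl⟩
  obtain ⟨n, rfl⟩ := Subgroup.mem_zpowers_iff.mp hg
  exact Equiv.Perm.apply_zpow_apply_eq hc n j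

theorem Equiv.Perm.orbitRel_mk_apply {ι : Type*} (σ : Equiv.Perm ι) (i : ι) :
    (Quotient.mk'' (σ i) : orbitRel.Quotient (Subgroup.zpowers σ) ι) = Quotient.mk'' i :=
  Quotient.sound' ⟨⟨σ, Subgroup.mem_zpowers σ⟩, rfl⟩

section OrbitSums

variable {R V ι : Type*} [Field R] [AddCommGroup V] [Module R V] [Fintype ι]

theorem Fintype.linearCombination_mem_eigenspace_iff {v : ι → V} (hv : LinearIndependent R v)
    {σ : Equiv.Perm ι} {f : End R V} {μ : R} (hμ : μ ≠ 0) (hf : ∀ i, f (v i) = μ • v (σ i))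
    (c : ι → R) :
    Fintype.linearCombination R v c ∈ eigenspace f μ ↔ ∀ i, c (σ i) = c i := by
  set L := Fintype.linearCombination R v
  have hL : ∀ c, f (L (c ∘ σ)) = μ • L c := fun c => by
    simp only [L, Fintype.linearCombination_apply, map_sum, map_smul, hf, Function.comp_apply,
      smul_comm _ μ, ← Finset.smul_sum]
    rw [Equiv.sum_comp σ (fun j => c j • v j)]
  have hc : c = (c ∘ σ.symm) ∘ σ := by ext; simp
  rw [mem_eigenspace_iff, hc, hL, (smul_right_injective V hμ).eq_iff,
    hv.fintypeLinearCombination_injective.eq_iff,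
    ← hc, Equiv.comp_symm_eq, funext_iff]
  exact forall_congr' fun i => eq_comm

theorem finrank_eigenspace_inf_span_eq_card_orbitRel_quotient {v : ι → V}
    (hv : LinearIndependent R v) {σ : Equiv.Perm ι} {f : End R V} {μ : R} (hμ : μ ≠ 0)
    (hf : ∀ i, f (v i) = μ • v (σ i)) :
    finrank R ↥(eigenspace f μ ⊓ span R (range v)) =
      Nat.card (orbitRel.Quotient (Subgroup.zpowers σ) ι) := by
  classical
  set π : ι → orbitRel.Quotient (Subgroup.zpowers σ) ι := Quotient.mk''
  set Ψ := Fintype.linearCombination R v ∘ₗ LinearMap.funLeft R R π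
  have hΨ : Function.Injective Ψ :=
    hv.fintypeLinearCombination_injective.comp
      (LinearMap.funLeft_injective_of_surjective _ _ π Quotient.mk''_surjective)
  have hrange : LinearMap.range Ψ = eigenspace f μ ⊓ span R (range v) := by
    ext x
    simp only [Ψ, LinearMap.mem_range, LinearMap.comp_apply, mem_inf,
      ← Fintype.range_linearCombination]
    constructor
    · rintro ⟨d, rfl⟩
      refine ⟨(Fintype.linearCombination_mem_eigenspace_iff hv hμ hf _).2 fun i => ?_, _, rfl⟩
      simp only [LinearMap.funLeft_apply, π, Equiv.Perm.orbitRel_mk_apply]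
    · rintro ⟨hx, c, rfl⟩
      obtain ⟨d, rfl⟩ := Equiv.Perm.exists_eq_comp_orbitRel_mk
        ((Fintype.linearCombination_mem_eigenspace_iff hv hμ hf c).1 hx)
      exact ⟨d, rfl⟩
  rw [← hrange, LinearMap.finrank_range_of_inj hΨ, finrank_fintype_fun_eq_card,
    Nat.card_eq_fintype_card]

end OrbitSums

theorem eigenspace_le_of_mapsTo_of_isCompl {R V : Type*} [Field R] [AddCommGroup V]
    [Module R V] {K C : Submodule R V} (hKC : IsCompl K C) {f : End R V} (hK : MapsTo f K K)
    (hC : ∀ z ∈ C, f z = z) {μ : R} (hμ : μ ≠ 1) : eigenspace f μ ≤ K := by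
  intro x hx
  obtain ⟨y, hy, z, hz, rfl⟩ := mem_sup.mp (hKC.sup_eq_top ▸ mem_top : x ∈ K ⊔ C)
  rw [mem_eigenspace_iff, map_add, hC z hz] at hx
  have hzK : (1 - μ) • z ∈ K := by
    have : (1 - μ) • z = μ • y - f y := by linear_combination (norm := module) hx
    rw [this]
    exact K.sub_mem (K.smul_mem μ hy) (hK hy)
  have hz0 : (1 - μ) • z = 0 :=
    (disjoint_def.mp hKC.disjoint) _ hzK (C.smul_mem _ hz)
  rw [smul_eq_zero, sub_eq_zero] at hz0
  rw [hz0.resolve_left (Ne.symm hμ), add_zero]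
  exact hy

theorem apply_eq_self_of_mem_closure_reflections {𝕜 V : Type*} [RCLike 𝕜]
    [NormedAddCommGroup V] [InnerProductSpace 𝕜 V] {I : Set V} {w : V ≃ₗᵢ[𝕜] V}
    (hw : w ∈ Subgroup.closure {u : V ≃ₗᵢ[𝕜] V | ∃ α ∈ I, u = reflection (𝕜 ∙ α)ᗮ})
    {z : V} (hz : z ∈ (span 𝕜 I)ᗮ) : w z = z := by
  induction hw using Subgroup.closure_induction with
  | mem u hu =>
    obtain ⟨α, hα, rfl⟩ := hu
    exact reflection_mem_subspace_eq_self
      (orthogonal_le ((span_singleton_le_iff_mem _ _).mpr (subset_span hα)) hz)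
  | one => rfl
  | mul u v _ _ hu hv => rw [LinearIsometryEquiv.coe_mul, Function.comp_apply, hv, hu]
  | inv u _ hu => rw [LinearIsometryEquiv.coe_inv, LinearIsometryEquiv.symm_apply_eq, hu]

theorem stmt0_general
    -- `V` is a finite-dimensional real inner product space
    (V : Type*) [NormedAddCommGroup V] [InnerProductSpace ℝ V] [FiniteDimensional ℝ V]
    -- `Σ` (written `S`) is a base of `Φ`: a basis of `V` such that every root is a linear
    -- combination of `S` with coefficients all `≥ 0` or all `≤ 0`
    (S : Set V)
    (b : Module.Basis S ℝ V) (hb : ∀ i : S, b i = (i : V))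
    -- `I ⊆ S`, and `w` is an element of the subgroup `W_I` generated by the reflections
    -- `s_α` for `α ∈ I`
    (I : Set V) (hIS : I ⊆ S)
    (w : V ≃ₗᵢ[ℝ] V)
    (hw : w ∈ Subgroup.closure
      { u : V ≃ₗᵢ[ℝ] V | ∃ α ∈ I, u = Submodule.reflection (ℝ ∙ α)ᗮ })
    -- `w(I) = -I` as subsets of `V`
    (hwI : (fun x => w x) '' I = -I) :
    -- then `-w` restricts to a permutation of `I`, and for any permutation `σ` of `I`
    -- agreeing with `-w`, the dimension of the `(-1)`-eigenspace of `w` equals the number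
    -- of orbits of `σ` on `I`
    (∀ α ∈ I, -(w α) ∈ I) ∧
      ∀ σ : Equiv.Perm I, (∀ α : I, ((σ α : V)) = -(w α)) →
        Module.finrank ℝ (Module.End.eigenspace (w.toLinearEquiv : V →ₗ[ℝ] V) (-1)) =
          Nat.card (MulAction.orbitRel.Quotient (Subgroup.zpowers σ) I) := by
  refine ⟨fun α hα => by simpa using hwI.subset (mem_image_of_mem _ hα), fun σ hσ => ?_⟩
  have : Finite S := Module.Finite.finite_basis b
  have : Fintype I := ((toFinite S).subset hIS).fintype
  have hI : LinearIndependent ℝ ((↑) : I → V) := by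
    simpa [Function.comp_def, hb] using b.linearIndependent.comp _ (inclusion_injective hIS)
  have hwspan : MapsTo w (span ℝ I) (span ℝ I) := by
    have : (span ℝ I).map (w.toLinearEquiv : V →ₗ[ℝ] V) = span ℝ I := by
      rw [map_span, ← span_neg I]
      exact congrArg _ hwI
    exact fun x hx => this ▸ mem_map_of_mem hx
  have hE : eigenspace (w.toLinearEquiv : V →ₗ[ℝ] V) (-1) ≤ span ℝ I :=
    eigenspace_le_of_mapsTo_of_isCompl (isCompl_orthogonal _) hwspan
      (fun z hz => apply_eq_self_of_mem_closure_reflections hw hz) (by norm_num)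
  have := finrank_eigenspace_inf_span_eq_card_orbitRel_quotient hI (μ := -1) (by norm_num)
    (f := w.toLinearEquiv) (σ := σ) (fun α => by simp [hσ])
  rwa [Subtype.range_coe, inf_eq_left.mpr hE] at this

/-- Let `I ⊆ Σ` and suppose `w ∈ W_I` satisfies `w(I) = −I` (as subsets of `V`). Then the map
`−w` (i.e. `x ↦ −w(x)`) restricts to a permutation of the finite set `I`, and the dimension
of the eigenspace of `w` for the eigenvalue `−1` equals the number of orbits of this
permutation of `I`. -/
theorem stmt0
    -- `V` is a finite-dimensional real inner product space
    (V : Type*) [NormedAddCommGroup V] [InnerProductSpace ℝ V] [FiniteDimensional ℝ V]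
    -- `Φ` is a finite reduced root system in `V`
    (Φ : Set V) (hΦfin : Φ.Finite)
    (hΦspan : Submodule.span ℝ Φ = ⊤)
    (hΦ0 : (0 : V) ∉ Φ)
    (hΦred : ∀ α ∈ Φ, ∀ t : ℝ, t • α ∈ Φ → t = 1 ∨ t = -1)
    (hΦrefl : ∀ α ∈ Φ, (fun x => (Submodule.reflection (ℝ ∙ α)ᗮ) x) '' Φ = Φ)
    -- `Σ` (written `S`) is a base of `Φ`: a basis of `V` such that every root is a linear
    -- combination of `S` with coefficients all `≥ 0` or all `≤ 0`
    (S : Set V) (hSΦ : S ⊆ Φ)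
    (b : Module.Basis S ℝ V) (hb : ∀ i : S, b i = (i : V))
    (hbase : ∀ β ∈ Φ, (∀ i, 0 ≤ b.repr β i) ∨ (∀ i, b.repr β i ≤ 0))
    -- `I ⊆ S`, and `w` is an element of the subgroup `W_I` generated by the reflections
    -- `s_α` for `α ∈ I`
    (I : Set V) (hIS : I ⊆ S)
    (w : V ≃ₗᵢ[ℝ] V)
    (hw : w ∈ Subgroup.closure
      { u : V ≃ₗᵢ[ℝ] V | ∃ α ∈ I, u = Submodule.reflection (ℝ ∙ α)ᗮ })
    -- `w(I) = -I` as subsets of `V`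
    (hwI : (fun x => w x) '' I = -I) :
    -- then `-w` restricts to a permutation of `I`, and for any permutation `σ` of `I`
    -- agreeing with `-w`, the dimension of the `(-1)`-eigenspace of `w` equals the number
    -- of orbits of `σ` on `I`
    (∀ α ∈ I, -(w α) ∈ I) ∧
      ∀ σ : Equiv.Perm I, (∀ α : I, ((σ α : V)) = -(w α)) →
        Module.finrank ℝ (Module.End.eigenspace (w.toLinearEquiv : V →ₗ[ℝ] V) (-1)) =
          Nat.card (MulAction.orbitRel.Quotient (Subgroup.zpowers σ) I) :=
  stmt0_general V S b hb I hIS w hw hwI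
end

section
/- Suppose w₀ ∈ W satisfies w₀(Σ) = −Σ, that I ⊆ Σ satisfies (−w₀)(I) = I, and that w_I ∈ W_I satisfies w_I(I) = −I. Then w₀ and w_I commute; moreover w₀∘w_I restricts to a permutation of I, −w₀ restricts to a permutation of Σ∖I, and the dimension of the eigenspace of w₀∘w_I for the eigenvalue −1 equals the number of orbits of size at least 2 of w₀∘w_I on I plus the number of orbits of −w₀ on Σ∖I. -/
/-!
A word in the simple reflections of `J ⊆ Σ` that sends every root of `J` to a positive root is
trivial: its last letter `s_a` sends `a` to `-a`, and at the letter `s_γ` where this root turns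
positive again, `s_γ` is conjugate to `s_a` by the letters in between, so both letters can be
deleted. Applied to `w₀²`, `w_I²` and `w_I⁻¹ w₀ w_I w₀⁻¹`, this shows that `w₀` and `w_I` are
commuting involutions.

So `f = w₀ w_I` is an involution and `2 dim E₋₁(f) = |Σ| - tr f`. In the basis `Σ`, `f` permutes
`I` by `σ`, while `f β ≡ w₀ β = -τ β` modulo `span I` for `β ∈ Σ ∖ I`, because `w_I` moves
vectors only within `span I`; hence `tr f = #Fix σ - #Fix τ`. For an involution of a finite set,
twice the number of orbits of size `2` is the number of moved points, which gives the formula.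
-/

open Module MulAction Set

section Reflections

variable {V : Type*} [NormedAddCommGroup V] [InnerProductSpace ℝ V]

noncomputable def rootReflection (α : V) : V ≃ₗᵢ[ℝ] V := (ℝ ∙ α)ᗮ.reflection

def reflectionSubgroup (J : Set V) : Subgroup (V ≃ₗᵢ[ℝ] V) :=
  Subgroup.closure {u | ∃ α ∈ J, u = rootReflection α}

theorem rootReflection_apply_self (α : V) : rootReflection α α = -α :=
  Submodule.reflection_orthogonalComplement_singleton_eq_neg α

theorem rootReflection_inv (α : V) : (rootReflection α)⁻¹ = rootReflection α :=
  Submodule.reflection_inv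

theorem rootReflection_mul_self (α : V) : rootReflection α * rootReflection α = 1 :=
  Submodule.reflection_mul_reflection _

theorem rootReflection_neg (α : V) : rootReflection (-α) = rootReflection α := by
  simp only [rootReflection, ← Set.neg_singleton, Submodule.span_neg]

theorem rootReflection_apply_sub_self_mem (α x : V) : rootReflection α x - x ∈ ℝ ∙ α := by
  rw [rootReflection, Submodule.reflection_orthogonal_apply, Submodule.reflection_apply]
  convert (ℝ ∙ α).neg_mem ((ℝ ∙ α).smul_of_tower_mem 2 ((ℝ ∙ α).starProjection_apply_mem x))
    using 1
  abel

theorem rootReflection_map (u : V ≃ₗᵢ[ℝ] V) (α : V) :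
    rootReflection (u α) = u * rootReflection α * u⁻¹ := by
  have h : (ℝ ∙ u α)ᗮ = (ℝ ∙ α)ᗮ.map (u.toLinearEquiv : V →ₗ[ℝ] V) := by
    rw [Submodule.map_orthogonal_equiv, Submodule.map_span, Set.image_singleton]
    rfl
  simp only [rootReflection, h, Submodule.reflection_map]
  rfl

theorem rootReflection_map_mul_mul_rootReflection (u : V ≃ₗᵢ[ℝ] V) (α : V) :
    rootReflection (u α) * u * rootReflection α = u := by
  rw [rootReflection_map, inv_mul_cancel_right, mul_assoc, rootReflection_mul_self, mul_one]

theorem conj_mem_reflectionSubgroup {J : Set V} {u w : V ≃ₗᵢ[ℝ] V}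
    (hu : MapsTo (fun x => -(u x)) J J) (hw : w ∈ reflectionSubgroup J) :
    u * w * u⁻¹ ∈ reflectionSubgroup J := by
  suffices reflectionSubgroup J ≤ (reflectionSubgroup J).comap (MulAut.conj u).toMonoidHom from
    this hw
  refine (Subgroup.closure_le _).mpr ?_
  rintro _ ⟨α, hα, rfl⟩
  show u * rootReflection α * u⁻¹ ∈ reflectionSubgroup J
  rw [← rootReflection_map, ← rootReflection_neg]
  exact Subgroup.subset_closure ⟨_, hu hα, rfl⟩

theorem apply_sub_self_mem_span {J : Set V} {w : V ≃ₗᵢ[ℝ] V} (hw : w ∈ reflectionSubgroup J)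
    (x : V) : w x - x ∈ Submodule.span ℝ J := by
  induction hw using Subgroup.closure_induction generalizing x with
  | mem u hu =>
    obtain ⟨α, hα, rfl⟩ := hu
    exact Submodule.span_mono (Set.singleton_subset_iff.mpr hα)
      (rootReflection_apply_sub_self_mem α x)
  | one => simp
  | mul u v _ _ hu hv =>
    simpa using add_mem (hu (v x)) (hv x)
  | inv u _ hu =>
    simpa using neg_mem (hu (u⁻¹ x))

theorem apply_mem_span_of_mapsTo_neg {J : Set V} {u : V ≃ₗᵢ[ℝ] V}
    (hu : MapsTo (fun x => -(u x)) J J) {x : V} (hx : x ∈ Submodule.span ℝ J) :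
    u x ∈ Submodule.span ℝ J := by
  suffices Submodule.span ℝ J ≤ (Submodule.span ℝ J).comap (u.toLinearEquiv : V →ₗ[ℝ] V) from
    this hx
  refine Submodule.span_le.mpr fun α hα => ?_
  simpa using neg_mem (Submodule.subset_span (hu hα))

end Reflections

section Words

variable {V : Type*} [NormedAddCommGroup V] [InnerProductSpace ℝ V]

noncomputable def wordProd (l : List V) : V ≃ₗᵢ[ℝ] V := (l.map rootReflection).prod

@[simp]
theorem wordProd_nil : wordProd ([] : List V) = 1 := rfl

@[simp]
theorem wordProd_cons (α : V) (l : List V) : wordProd (α :: l) = rootReflection α * wordProd l :=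
  List.prod_cons

@[simp]
theorem wordProd_append (l₁ l₂ : List V) : wordProd (l₁ ++ l₂) = wordProd l₁ * wordProd l₂ := by
  simp [wordProd]

theorem wordProd_reverse (l : List V) : wordProd l.reverse = (wordProd l)⁻¹ := by
  simp [wordProd, List.prod_inv_reverse, Function.comp_def, rootReflection_inv]

theorem exists_wordProd_eq {J : Set V} {w : V ≃ₗᵢ[ℝ] V} (hw : w ∈ reflectionSubgroup J) :
    ∃ l : List V, (∀ γ ∈ l, γ ∈ J) ∧ wordProd l = w := by
  induction hw using Subgroup.closure_induction with
  | mem u hu =>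
    obtain ⟨α, hα, rfl⟩ := hu
    exact ⟨[α], by simpa using hα, by simp⟩
  | one => exact ⟨[], by simp, rfl⟩
  | mul u v _ _ hu hv =>
    obtain ⟨l₁, h₁, rfl⟩ := hu
    obtain ⟨l₂, h₂, rfl⟩ := hv
    exact ⟨l₁ ++ l₂, fun γ hγ => (List.mem_append.mp hγ).elim (h₁ γ) (h₂ γ), wordProd_append _ _⟩
  | inv u _ hu =>
    obtain ⟨l, h, rfl⟩ := hu
    exact ⟨l.reverse, fun γ hγ => h γ (List.mem_reverse.mp hγ), wordProd_reverse l⟩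

end Words

section Basis

variable {K V : Type*} [Semiring K] [AddCommMonoid V] [Module K V] {S : Set V} {b : Basis S K V}

theorem repr_coe (hb : ∀ i : S, b i = i) (i : S) : b.repr i = Finsupp.single i 1 := by
  rw [← hb i, b.repr_self]

theorem repr_eq_zero_of_mem_span (hb : ∀ i : S, b i = i) {J : Set V} (hJS : J ⊆ S) {x : V}
    (hx : x ∈ Submodule.span K J) {i : S} (hi : (i : V) ∉ J) : b.repr x i = 0 := by
  suffices Submodule.span K J ≤ LinearMap.ker (b.coord i) from this hx
  refine Submodule.span_le.mpr fun α hα => ?_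
  have hne : i ≠ ⟨α, hJS hα⟩ := fun h => hi (h ▸ hα)
  rw [SetLike.mem_coe, LinearMap.mem_ker, Basis.coord_apply]
  exact (DFunLike.congr_fun (repr_coe hb ⟨α, hJS hα⟩) i).trans (Finsupp.single_eq_of_ne hne)

end Basis

section Positive

variable {V : Type*} [AddCommGroup V] [Module ℝ V] {S : Set V}

def IsPositive (b : Basis S ℝ V) (β : V) : Prop := ∀ i, 0 ≤ b.repr β i

theorem isPositive_of_mem {b : Basis S ℝ V} (hb : ∀ i : S, b i = i) {α : V} (hα : α ∈ S) :
    IsPositive b α := fun j => by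
  rw [show α = ((⟨α, hα⟩ : S) : V) from rfl, repr_coe hb]
  exact Finsupp.single_nonneg.mpr zero_le_one j

end Positive

structure IsRootBase {V : Type*} [NormedAddCommGroup V] [InnerProductSpace ℝ V]
    (Φ S : Set V) (b : Basis S ℝ V) : Prop where
  subset : S ⊆ Φ
  zero_notMem : (0 : V) ∉ Φ
  reduced : ∀ α ∈ Φ, ∀ t : ℝ, t • α ∈ Φ → t = 1 ∨ t = -1
  rootReflection_mem : ∀ α ∈ Φ, ∀ β ∈ Φ, rootReflection α β ∈ Φ
  basis_apply : ∀ i : S, b i = i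
  nonneg_or_nonpos : ∀ β ∈ Φ, (∀ i, 0 ≤ b.repr β i) ∨ ∀ i, b.repr β i ≤ 0

namespace IsRootBase

variable {V : Type*} [NormedAddCommGroup V] [InnerProductSpace ℝ V]
  {Φ S : Set V} {b : Basis S ℝ V}

theorem isPositive_or_isPositive_neg (hR : IsRootBase Φ S b) {β : V} (hβ : β ∈ Φ) :
    IsPositive b β ∨ IsPositive b (-β) :=
  (hR.nonneg_or_nonpos β hβ).imp id fun h i => by simpa using h i

theorem not_isPositive_neg (hR : IsRootBase Φ S b) {β : V} (hβ : β ∈ Φ) (hpos : IsPositive b β) :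
    ¬IsPositive b (-β) := fun hneg => by
  have : b.repr β = 0 := Finsupp.ext fun i => le_antisymm (by simpa using hneg i) (hpos i)
  exact hR.zero_notMem (b.repr.map_eq_zero_iff.mp this ▸ hβ)

theorem neg_mem (hR : IsRootBase Φ S b) {β : V} (hβ : β ∈ Φ) : -β ∈ Φ :=
  rootReflection_apply_self β ▸ hR.rootReflection_mem β hβ β hβ

theorem wordProd_mem (hR : IsRootBase Φ S b) {l : List V} (hl : ∀ γ ∈ l, γ ∈ S) {x : V}
    (hx : x ∈ Φ) : wordProd l x ∈ Φ := by
  induction l with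
  | nil => exact hx
  | cons α l ih =>
    simp only [List.mem_cons, forall_eq_or_imp] at hl
    exact hR.rootReflection_mem α (hR.subset hl.1) _ (ih hl.2)

theorem isPositive_rootReflection (hR : IsRootBase Φ S b) {α β : V} (hα : α ∈ S) (hβ : β ∈ Φ)
    (hpos : IsPositive b β) (hne : β ≠ α) : IsPositive b (rootReflection α β) := by
  set i : S := ⟨α, hα⟩
  have hrepr_α : b.repr α = Finsupp.single i 1 := repr_coe hR.basis_apply i
  -- by reducedness `β` is not a multiple of `α`, so it has a positive coordinate that `s_α` keeps
  obtain ⟨j, hji, hj⟩ : ∃ j ≠ i, 0 < b.repr β j := by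
    by_contra! h
    have hβα : β = b.repr β i • α := b.repr.injective <| Finsupp.ext fun j => by
      by_cases hj : j = i
      · simp [hj, hrepr_α]
      · simp [hrepr_α, Finsupp.single_eq_of_ne hj, le_antisymm (h j hj) (hpos j)]
    rcases hR.reduced α (hR.subset hα) _ (hβα ▸ hβ) with h1 | h1
    · exact hne (by rw [hβα, h1, one_smul])
    · linarith [hpos i]
  obtain ⟨c, hc⟩ := Submodule.mem_span_singleton.mp (rootReflection_apply_sub_self_mem α β)
  have hcoord : b.repr (rootReflection α β) j = b.repr β j := by
    rw [← sub_add_cancel (rootReflection α β) β, ← hc, map_add, map_smul, hrepr_α]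
    simp [Finsupp.single_eq_of_ne hji]
  have hmem := hR.rootReflection_mem α (hR.subset hα) β hβ
  refine (hR.isPositive_or_isPositive_neg hmem).resolve_right fun hneg => ?_
  have := hneg j
  rw [map_neg, Finsupp.neg_apply, hcoord] at this
  linarith

/-- Applying the letters of `l` to `x` from the right, the root turns from negative to positive
at some letter `γ`; as the only positive root that `s_γ` makes negative is `γ`, the root just
before that letter is `-γ`. -/
theorem exists_eq_append_cons (hR : IsRootBase Φ S b) {l : List V} (hl : ∀ γ ∈ l, γ ∈ S)
    {x : V} (hx : x ∈ Φ) (hneg : IsPositive b (-x)) (hpos : IsPositive b (wordProd l x)) :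
    ∃ l₁ γ l₂, l = l₁ ++ γ :: l₂ ∧ wordProd l₂ x = -γ := by
  induction l with
  | nil => exact absurd hneg (hR.not_isPositive_neg hx hpos)
  | cons α l ih =>
    simp only [List.mem_cons, forall_eq_or_imp] at hl
    by_cases hpos' : IsPositive b (wordProd l x)
    · obtain ⟨l₁, γ, l₂, rfl, h⟩ := ih hl.2 hpos'
      exact ⟨α :: l₁, γ, l₂, rfl, h⟩
    refine ⟨[], α, l, rfl, ?_⟩
    set y := wordProd l x
    have hy : y ∈ Φ := hR.wordProd_mem hl.2 hx
    have hneg' : IsPositive b (-y) := (hR.isPositive_or_isPositive_neg hy).resolve_left hpos'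
    by_contra hne
    have h := hR.isPositive_rootReflection hl.1 (hR.neg_mem hy) hneg'
      fun h => hne (by rw [← h, neg_neg])
    rw [map_neg] at h
    exact hR.not_isPositive_neg (hR.rootReflection_mem α (hR.subset hl.1) y hy) hpos h

theorem wordProd_eq_one (hR : IsRootBase Φ S b) {J : Set V} (hJS : J ⊆ S) {l : List V}
    (hl : ∀ γ ∈ l, γ ∈ J) (hpos : ∀ γ ∈ J, IsPositive b (wordProd l γ)) : wordProd l = 1 := by
  induction hn : l.length using Nat.strong_induction_on generalizing l with
  | _ n ih =>
  obtain rfl | ⟨t, a, rfl⟩ := l.eq_nil_or_concat'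
  · rfl
  have ha : a ∈ J := hl a (by simp)
  obtain ⟨l₁, γ, l₂, rfl, h⟩ := hR.exists_eq_append_cons (l := t)
    (fun γ hγ => hJS (hl γ (by simp [hγ]))) (hR.neg_mem (hR.subset (hJS ha)))
    (by simpa using isPositive_of_mem hR.basis_apply (hJS ha))
    (by simpa [rootReflection_apply_self] using hpos a ha)
  rw [map_neg, neg_inj] at h
  -- `s_γ = w s_a w⁻¹` for `w = wordProd l₂`, so the letters `γ` and `a` cancel
  have hdel : wordProd (l₁ ++ γ :: l₂ ++ [a]) = wordProd (l₁ ++ l₂) := by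
    simp only [wordProd_append, wordProd_cons, wordProd_nil, mul_one, mul_assoc, ← h]
    rw [← mul_assoc (rootReflection _), rootReflection_map_mul_mul_rootReflection]
  rw [hdel] at hpos ⊢
  refine ih _ ?_ (fun γ' hγ' => hl γ' ?_) hpos rfl
  · simp only [List.length_append, List.length_cons] at hn ⊢
    omega
  · simp only [List.mem_append, List.mem_cons] at hγ' ⊢
    tauto

theorem eq_one_of_mapsTo (hR : IsRootBase Φ S b) {J : Set V} (hJS : J ⊆ S)
    {w : V ≃ₗᵢ[ℝ] V} (hw : w ∈ reflectionSubgroup J) (hwJ : MapsTo w J J) : w = 1 := by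
  obtain ⟨l, hl, rfl⟩ := exists_wordProd_eq hw
  exact hR.wordProd_eq_one hJS hl fun γ hγ => isPositive_of_mem hR.basis_apply (hJS (hwJ hγ))

theorem mul_self_eq_one (hR : IsRootBase Φ S b) {J : Set V} (hJS : J ⊆ S)
    {w : V ≃ₗᵢ[ℝ] V} (hw : w ∈ reflectionSubgroup J) (hwJ : MapsTo (fun x => -(w x)) J J) :
    w * w = 1 :=
  hR.eq_one_of_mapsTo hJS (mul_mem hw hw) fun γ hγ => by
    simpa using hwJ (hwJ hγ)

theorem commute (hR : IsRootBase Φ S b) {J : Set V} (hJS : J ⊆ S)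
    {u w : V ≃ₗᵢ[ℝ] V} (hu : u * u = 1) (huJ : MapsTo (fun x => -(u x)) J J)
    (hw : w ∈ reflectionSubgroup J) (hwJ : MapsTo (fun x => -(w x)) J J) : Commute u w := by
  have hu' : u⁻¹ = u := inv_eq_of_mul_eq_one_right hu
  have hw' : w⁻¹ = w := inv_eq_of_mul_eq_one_right (hR.mul_self_eq_one hJS hw hwJ)
  have h : w⁻¹ * (u * w * u⁻¹) = 1 := by
    refine hR.eq_one_of_mapsTo hJS
      (mul_mem (inv_mem hw) (conj_mem_reflectionSubgroup huJ hw)) fun γ hγ => ?_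
    simpa [hu', hw'] using hwJ (huJ (hwJ (huJ hγ)))
  rw [inv_mul_eq_one, eq_mul_inv_iff_mul_eq] at h
  exact h.symm

end IsRootBase

section InvolutionOrbits

variable {X : Type*} {π : Equiv.Perm X}

local notation "Q" => orbitRel.Quotient (Subgroup.zpowers π) X

theorem eq_of_mem_orbit_zpowers_of_apply_eq_self {x y : X} (hy : y ∈ orbit (Subgroup.zpowers π) x)
    (hx : π x = x) : y = x := by
  obtain ⟨⟨_, hg⟩, rfl⟩ := hy
  obtain ⟨k, rfl⟩ := Subgroup.mem_zpowers_iff.mp hg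
  exact Equiv.Perm.zpow_apply_eq_self_of_apply_eq_self hx k

theorem out_mk_of_apply_eq_self {x : X} (hx : π x = x) : (⟦x⟧ : Q).out = x :=
  eq_of_mem_orbit_zpowers_of_apply_eq_self (orbitRel_apply.mp (Quotient.mk_out x)) hx

theorem card_fixed_eq_card_fixed_orbits :
    Nat.card {x // π x = x} = Nat.card {q : Q // π q.out = q.out} :=
  Nat.card_congr
    { toFun := fun x => ⟨⟦x.1⟧, by rw [out_mk_of_apply_eq_self x.2]; exact x.2⟩
      invFun := fun q => ⟨q.1.out, q.2⟩
      left_inv := fun x => Subtype.ext (out_mk_of_apply_eq_self x.2)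
      right_inv := fun q => Subtype.ext q.1.out_eq }

variable [Finite X]

open scoped Classical in
theorem Function.Involutive.card_orbit_zpowers (hπ : Function.Involutive π) (x : X) :
    Nat.card (orbit (Subgroup.zpowers π) x) = if π x = x then 1 else 2 := by
  let := Fintype.ofFinite (orbit (Subgroup.zpowers π) x)
  rw [Nat.card_eq_fintype_card, ← minimalPeriod_eq_card]
  split_ifs with h
  · exact Function.minimalPeriod_eq_one_iff_isFixedPt.mpr h
  · have hper : Function.IsPeriodicPt (π • ·) 2 x := hπ x
    rcases (Nat.dvd_prime Nat.prime_two).mp hper.minimalPeriod_dvd with h1 | h2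
    · exact absurd (Function.minimalPeriod_eq_one_iff_isFixedPt.mp h1) h
    · exact h2

theorem Function.Involutive.card_eq_card_fixed_orbits_add_two_mul (hπ : Function.Involutive π) :
    Nat.card X = Nat.card {q : Q // π q.out = q.out} + 2 * Nat.card {q : Q // π q.out ≠ q.out} := by
  classical
  let := Fintype.ofFinite Q
  rw [Nat.card_congr (selfEquivSigmaOrbits' (Subgroup.zpowers π) X), Nat.card_sigma]
  simp only [orbitRel.Quotient.orbit_eq_orbit_out _ Quotient.out_eq', hπ.card_orbit_zpowers]
  rw [Finset.sum_ite, Finset.sum_const, Finset.sum_const]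
  simp [Nat.card_eq_fintype_card, Fintype.card_subtype, mul_comm]

theorem Function.Involutive.two_mul_card_nontrivial_orbits_add (hπ : Function.Involutive π) :
    2 * Nat.card {q : Q // 2 ≤ Nat.card q.orbit} + Nat.card {x // π x = x} = Nat.card X := by
  have h : Nat.card {q : Q // 2 ≤ Nat.card q.orbit} = Nat.card {q : Q // π q.out ≠ q.out} :=
    Nat.card_congr <| Equiv.subtypeEquivRight fun q => by
      rw [orbitRel.Quotient.orbit_eq_orbit_out _ Quotient.out_eq', hπ.card_orbit_zpowers]
      split_ifs with hq <;> simp [hq]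
  rw [h, card_fixed_eq_card_fixed_orbits, hπ.card_eq_card_fixed_orbits_add_two_mul]
  ring

theorem Function.Involutive.two_mul_card_orbits (hπ : Function.Involutive π) :
    2 * Nat.card Q = Nat.card X + Nat.card {x // π x = x} := by
  classical
  rw [← Nat.card_congr (Equiv.sumCompl fun q : Q => π q.out = q.out), Nat.card_sum,
    card_fixed_eq_card_fixed_orbits, hπ.card_eq_card_fixed_orbits_add_two_mul]
  ring

end InvolutionOrbits

theorem two_mul_finrank_eigenspace_neg_one {K W : Type*} [Field K] [NeZero (2 : K)]
    [AddCommGroup W] [Module K W] [FiniteDimensional K W] (g : W →ₗ[K] W)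
    (hg : g ∘ₗ g = LinearMap.id) :
    2 * (finrank K (Module.End.eigenspace g (-1)) : K) = finrank K W - LinearMap.trace K W g := by
  have hgg : ∀ x, g (g x) = x := LinearMap.congr_fun hg
  -- `(1 - g) / 2` is the projection onto the `-1`-eigenspace along the `1`-eigenspace
  have hproj : LinearMap.IsProj (Module.End.eigenspace g (-1))
      ((2⁻¹ : K) • (LinearMap.id - g)) := by
    constructor
    · intro x
      simp only [Module.End.mem_eigenspace_iff, LinearMap.smul_apply, LinearMap.sub_apply,
        LinearMap.id_apply, map_smul, map_sub, hgg]
      module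
    · intro x hx
      rw [Module.End.mem_eigenspace_iff] at hx
      simp only [LinearMap.smul_apply, LinearMap.sub_apply, LinearMap.id_apply, hx]
      rw [neg_one_smul, sub_neg_eq_add, ← two_smul K x, smul_smul, inv_mul_cancel₀ two_ne_zero,
        one_smul]
  have htr := hproj.trace
  rw [map_smul, map_sub, LinearMap.trace_id, smul_eq_mul] at htr
  rw [← htr, ← mul_assoc, mul_inv_cancel₀ two_ne_zero, one_mul]

theorem trace_eq_card_fixed_sub_card_fixed {K V : Type*} [Field K] [AddCommGroup V] [Module K V]
    [FiniteDimensional K V] {S I : Set V} (b : Basis S K V) (hb : ∀ i : S, b i = i)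
    (hIS : I ⊆ S) (f : V →ₗ[K] V) (g : V → V) (σ : I → I) (τ : ↥(S \ I) → ↥(S \ I))
    (hσ : ∀ α : I, (σ α : V) = f α) (hτ : ∀ β : ↥(S \ I), (τ β : V) = g β)
    (hfg : ∀ β ∈ S \ I, f β + g β ∈ Submodule.span K I) :
    LinearMap.trace K V f = Nat.card {α // σ α = α} - Nat.card {β // τ β = β} := by
  classical
  have : Finite S := Module.Finite.finite_basis b
  have : Finite I := Finite.Set.subset S hIS
  let := Fintype.ofFinite S
  let := Fintype.ofFinite I
  let := Fintype.ofFinite ↥(S \ I)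
  rw [LinearMap.trace_eq_matrix_trace K b, Matrix.trace,
    ← Fintype.sum_subtype_add_sum_subtype (fun i : S => (i : V) ∈ I), sub_eq_add_neg]
  simp only [Matrix.diag_apply, LinearMap.toMatrix_apply, hb]
  congr 1
  · rw [Fintype.sum_equiv (Equiv.subtypeSubtypeEquivSubtype (hIS ·)) _
      (fun α => if σ α = α then 1 else 0) fun i => ?_]
    · simp [Finset.sum_boole, Nat.card_eq_fintype_card, Fintype.card_subtype]
    obtain ⟨⟨x, hxS⟩, hxI⟩ := i
    have hfx : f x = ((⟨σ ⟨x, hxI⟩, hIS (σ ⟨x, hxI⟩).2⟩ : S) : V) := (hσ ⟨x, hxI⟩).symm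
    rw [hfx, repr_coe hb, Finsupp.single_apply]
    simp only [Subtype.ext_iff]
    rfl
  · rw [Fintype.sum_equiv (κ := ↥(S \ I)) (Equiv.subtypeSubtypeEquivSubtypeInter (· ∈ S) (· ∉ I)) _
      (fun β => -if τ β = β then 1 else 0) fun i => ?_]
    · simp [Finset.sum_boole, Nat.card_eq_fintype_card, Fintype.card_subtype]
    obtain ⟨⟨x, hxS⟩, hxI⟩ := i
    have hfx : f x = -((⟨τ ⟨x, hxS, hxI⟩, (τ ⟨x, hxS, hxI⟩).2.1⟩ : S) : V) + (f x + g x) := by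
      rw [hτ]; abel
    rw [hfx, map_add, Finsupp.add_apply, repr_eq_zero_of_mem_span hb hIS (hfg x ⟨hxS, hxI⟩) hxI]
    rw [map_neg, repr_coe hb, Finsupp.neg_apply, Finsupp.single_apply, add_zero]
    simp only [Subtype.ext_iff]
    rfl

theorem finrank_eigenspace_neg_one_eq_of_trace {W X Y : Type*} [AddCommGroup W] [Module ℝ W]
    [FiniteDimensional ℝ W] [Finite X] [Finite Y] (f : W →ₗ[ℝ] W) (hf : f ∘ₗ f = LinearMap.id)
    (hdim : finrank ℝ W = Nat.card X + Nat.card Y) {σ : Equiv.Perm X} {τ : Equiv.Perm Y}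
    (hσ : Function.Involutive σ) (hτ : Function.Involutive τ)
    (htr : LinearMap.trace ℝ W f = Nat.card {x // σ x = x} - Nat.card {y // τ y = y}) :
    finrank ℝ (Module.End.eigenspace f (-1)) =
      Nat.card {q : orbitRel.Quotient (Subgroup.zpowers σ) X // 2 ≤ Nat.card q.orbit} +
        Nat.card (orbitRel.Quotient (Subgroup.zpowers τ) Y) := by
  have hE := two_mul_finrank_eigenspace_neg_one f hf
  have hX : (2 * Nat.card {q : orbitRel.Quotient (Subgroup.zpowers σ) X // 2 ≤ Nat.card q.orbit}
      + Nat.card {x // σ x = x} : ℝ) = Nat.card X := by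
    exact_mod_cast hσ.two_mul_card_nontrivial_orbits_add
  have hY : (2 * Nat.card (orbitRel.Quotient (Subgroup.zpowers τ) Y) : ℝ) =
      Nat.card Y + Nat.card {y // τ y = y} := by
    exact_mod_cast hτ.two_mul_card_orbits
  rw [htr, hdim] at hE
  suffices (finrank ℝ (Module.End.eigenspace f (-1)) : ℝ) =
      (Nat.card {q : orbitRel.Quotient (Subgroup.zpowers σ) X // 2 ≤ Nat.card q.orbit} +
        Nat.card (orbitRel.Quotient (Subgroup.zpowers τ) Y) : ℕ) by exact_mod_cast this
  push_cast at hE ⊢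
  linarith

theorem mapsTo_neg_of_image_eq_neg {V : Type*} [NormedAddCommGroup V] [InnerProductSpace ℝ V]
    {J : Set V} {u : V ≃ₗᵢ[ℝ] V} (hu : (fun x => u x) '' J = -J) :
    MapsTo (fun x => -(u x)) J J := fun γ hγ => by
  simpa using (hu ▸ mem_image_of_mem _ hγ : u γ ∈ -J)

theorem stmt1_general
    -- `V` is a finite-dimensional real inner product space
    (V : Type*) [NormedAddCommGroup V] [InnerProductSpace ℝ V] [FiniteDimensional ℝ V]
    -- `Φ` is a finite reduced root system in `V`
    (Φ : Set V)
    (hΦ0 : (0 : V) ∉ Φ)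
    (hΦred : ∀ α ∈ Φ, ∀ t : ℝ, t • α ∈ Φ → t = 1 ∨ t = -1)
    (hΦrefl : ∀ α ∈ Φ, (fun x => (Submodule.reflection (ℝ ∙ α)ᗮ) x) '' Φ = Φ)
    -- `Σ` (written `S`) is a base of `Φ`
    (S : Set V) (hSΦ : S ⊆ Φ)
    (b : Module.Basis S ℝ V) (hb : ∀ i : S, b i = (i : V))
    (hbase : ∀ β ∈ Φ, (∀ i, 0 ≤ b.repr β i) ∨ (∀ i, b.repr β i ≤ 0))
    -- `w₀ ∈ W = W_Σ` satisfies `w₀(Σ) = -Σ`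
    (w₀ : V ≃ₗᵢ[ℝ] V)
    (hw₀W : w₀ ∈ Subgroup.closure
      { u : V ≃ₗᵢ[ℝ] V | ∃ α ∈ S, u = Submodule.reflection (ℝ ∙ α)ᗮ })
    (hw₀S : (fun x => w₀ x) '' S = -S)
    -- `I ⊆ S` satisfies `(-w₀)(I) = I`
    (I : Set V) (hIS : I ⊆ S)
    (hI : (fun x => -(w₀ x)) '' I = I)
    -- `w_I ∈ W_I` satisfies `w_I(I) = -I`
    (wI : V ≃ₗᵢ[ℝ] V)
    (hwIW : wI ∈ Subgroup.closure
      { u : V ≃ₗᵢ[ℝ] V | ∃ α ∈ I, u = Submodule.reflection (ℝ ∙ α)ᗮ })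
    (hwII : (fun x => wI x) '' I = -I) :
    -- `w₀` and `w_I` commute
    (∀ x : V, w₀ (wI x) = wI (w₀ x)) ∧
    -- `w₀ ∘ w_I` restricts to a permutation of `I`
    (∀ α ∈ I, w₀ (wI α) ∈ I) ∧
    -- `-w₀` restricts to a permutation of `Σ ∖ I`
    (∀ β ∈ S \ I, -(w₀ β) ∈ S \ I) ∧
    -- the dimension formula, for any permutations `σ` of `I` and `τ` of `S ∖ I`
    -- agreeing with `w₀ ∘ w_I` and `-w₀` respectively
    (∀ (σ : Equiv.Perm I) (τ : Equiv.Perm ↥(S \ I)),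
      (∀ α : I, ((σ α : V)) = w₀ (wI α)) →
      (∀ β : ↥(S \ I), ((τ β : V)) = -(w₀ β)) →
      Module.finrank ℝ (Module.End.eigenspace
          ((w₀.toLinearEquiv : V →ₗ[ℝ] V) ∘ₗ (wI.toLinearEquiv : V →ₗ[ℝ] V)) (-1)) =
        Nat.card {q : MulAction.orbitRel.Quotient (Subgroup.zpowers σ) I //
            2 ≤ Nat.card q.orbit} +
          Nat.card (MulAction.orbitRel.Quotient (Subgroup.zpowers τ) ↥(S \ I))) := by
  have hR : IsRootBase Φ S b :=
    ⟨hSΦ, hΦ0, hΦred, fun α hα β hβ => hΦrefl α hα ▸ mem_image_of_mem _ hβ, hb, hbase⟩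
  have hw₀S' := mapsTo_neg_of_image_eq_neg hw₀S
  have hwII' := mapsTo_neg_of_image_eq_neg hwII
  have hw₀I : MapsTo (fun x => -(w₀ x)) I I := fun γ hγ => hI ▸ mem_image_of_mem _ hγ
  have hw₀sq := hR.mul_self_eq_one subset_rfl hw₀W hw₀S'
  have hw₀2 (x : V) : w₀ (w₀ x) = x := DFunLike.congr_fun hw₀sq x
  have hwI2 (x : V) : wI (wI x) = x := DFunLike.congr_fun (hR.mul_self_eq_one hIS hwIW hwII') x
  have hcomm (x : V) : w₀ (wI x) = wI (w₀ x) :=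
    DFunLike.congr_fun (hR.commute hIS hw₀sq hw₀I hwIW hwII').eq x
  refine ⟨hcomm, fun α hα => by simpa using hw₀I (hwII' hα),
    fun β hβ => ⟨hw₀S' hβ.1, fun h => hβ.2 (by simpa [hw₀2] using hw₀I h)⟩, fun σ τ hσ hτ => ?_⟩
  have : Finite S := Module.Finite.finite_basis b
  have : Finite I := Finite.Set.subset S hIS
  refine finrank_eigenspace_neg_one_eq_of_trace _ (LinearMap.ext fun x => ?_) ?_
    (fun α => ?_) (fun β => ?_)
    (trace_eq_card_fixed_sub_card_fixed b hb hIS _ (fun x => -(w₀ x)) σ τ hσ hτ fun β _ => ?_)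
  · simp [hcomm, hw₀2, hwI2]
  · classical
    rw [finrank_eq_nat_card_basis b, ← Nat.card_sum, Nat.card_congr (Equiv.Set.sumDiffSubset hIS)]
  · ext
    simp [hσ, hcomm, hw₀2, hwI2]
  · ext
    simp [hτ, hw₀2]
  · simpa [← sub_eq_add_neg] using
      apply_mem_span_of_mapsTo_neg hw₀I (apply_sub_self_mem_span hwIW β)

/-- Suppose `w₀ ∈ W` satisfies `w₀(Σ) = −Σ`, that `I ⊆ Σ` satisfies `(−w₀)(I) = I`, and that
`w_I ∈ W_I` satisfies `w_I(I) = −I`. Then `w₀` and `w_I` commute; moreover `w₀ ∘ w_I`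
restricts to a permutation of `I`, `−w₀` restricts to a permutation of `Σ ∖ I`, and the
dimension of the eigenspace of `w₀ ∘ w_I` for the eigenvalue `−1` equals the number of
orbits of size at least 2 of `w₀ ∘ w_I` on `I` plus the number of orbits of `−w₀` on
`Σ ∖ I`. -/
theorem stmt1
    -- `V` is a finite-dimensional real inner product space
    (V : Type*) [NormedAddCommGroup V] [InnerProductSpace ℝ V] [FiniteDimensional ℝ V]
    -- `Φ` is a finite reduced root system in `V`
    (Φ : Set V) (hΦfin : Φ.Finite)
    (hΦspan : Submodule.span ℝ Φ = ⊤)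
    (hΦ0 : (0 : V) ∉ Φ)
    (hΦred : ∀ α ∈ Φ, ∀ t : ℝ, t • α ∈ Φ → t = 1 ∨ t = -1)
    (hΦrefl : ∀ α ∈ Φ, (fun x => (Submodule.reflection (ℝ ∙ α)ᗮ) x) '' Φ = Φ)
    -- `Σ` (written `S`) is a base of `Φ`
    (S : Set V) (hSΦ : S ⊆ Φ)
    (b : Module.Basis S ℝ V) (hb : ∀ i : S, b i = (i : V))
    (hbase : ∀ β ∈ Φ, (∀ i, 0 ≤ b.repr β i) ∨ (∀ i, b.repr β i ≤ 0))
    -- `w₀ ∈ W = W_Σ` satisfies `w₀(Σ) = -Σ`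
    (w₀ : V ≃ₗᵢ[ℝ] V)
    (hw₀W : w₀ ∈ Subgroup.closure
      { u : V ≃ₗᵢ[ℝ] V | ∃ α ∈ S, u = Submodule.reflection (ℝ ∙ α)ᗮ })
    (hw₀S : (fun x => w₀ x) '' S = -S)
    -- `I ⊆ S` satisfies `(-w₀)(I) = I`
    (I : Set V) (hIS : I ⊆ S)
    (hI : (fun x => -(w₀ x)) '' I = I)
    -- `w_I ∈ W_I` satisfies `w_I(I) = -I`
    (wI : V ≃ₗᵢ[ℝ] V)
    (hwIW : wI ∈ Subgroup.closure
      { u : V ≃ₗᵢ[ℝ] V | ∃ α ∈ I, u = Submodule.reflection (ℝ ∙ α)ᗮ })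
    (hwII : (fun x => wI x) '' I = -I) :
    -- `w₀` and `w_I` commute
    (∀ x : V, w₀ (wI x) = wI (w₀ x)) ∧
    -- `w₀ ∘ w_I` restricts to a permutation of `I`
    (∀ α ∈ I, w₀ (wI α) ∈ I) ∧
    -- `-w₀` restricts to a permutation of `Σ ∖ I`
    (∀ β ∈ S \ I, -(w₀ β) ∈ S \ I) ∧
    -- the dimension formula, for any permutations `σ` of `I` and `τ` of `S ∖ I`
    -- agreeing with `w₀ ∘ w_I` and `-w₀` respectively
    (∀ (σ : Equiv.Perm I) (τ : Equiv.Perm ↥(S \ I)),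
      (∀ α : I, ((σ α : V)) = w₀ (wI α)) →
      (∀ β : ↥(S \ I), ((τ β : V)) = -(w₀ β)) →
      Module.finrank ℝ (Module.End.eigenspace
          ((w₀.toLinearEquiv : V →ₗ[ℝ] V) ∘ₗ (wI.toLinearEquiv : V →ₗ[ℝ] V)) (-1)) =
        Nat.card {q : MulAction.orbitRel.Quotient (Subgroup.zpowers σ) I //
            2 ≤ Nat.card q.orbit} +
          Nat.card (MulAction.orbitRel.Quotient (Subgroup.zpowers τ) ↥(S \ I))) :=
  stmt1_general V Φ hΦ0 hΦred hΦrefl S hSΦ b hb hbase w₀ hw₀W hw₀S I hIS hI wI hwIW hwII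
end

section
/- For every permutation u of {0,1,…,2n} with u² = 1 and u∘w₀ = w₀∘u, there exists exactly one pair (k,l) of integers with k,l ≥ 0 and 2k + l ≤ n such that u = g ∘ c_{k,l} ∘ g⁻¹ for some permutation g of {0,1,…,2n} commuting with w₀. -/
open Fin.NatCast in
/-- The involution `c_{k,l}` in the symmetric group on `{0, 1, …, 2n}`: it swaps
`2j ↔ 2j+1` and `2n−2j−1 ↔ 2n−2j` for each `0 ≤ j < k`, maps `n+i ↦ n−i` for every
integer `i` with `−l ≤ i ≤ l`, and fixes all other points.  (Here it is written as a
product of the corresponding disjoint transpositions.) -/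
def cA (n k l : ℕ) : Equiv.Perm (Fin (2 * n + 1)) :=
  (((List.range k).map fun j =>
      Equiv.swap ((2 * j : ℕ) : Fin (2 * n + 1)) ((2 * j + 1 : ℕ) : Fin (2 * n + 1)) *
      Equiv.swap ((2 * n - 2 * j - 1 : ℕ) : Fin (2 * n + 1))
        ((2 * n - 2 * j : ℕ) : Fin (2 * n + 1))).prod) *
  (((List.range l).map fun i =>
      Equiv.swap ((n - (i + 1) : ℕ) : Fin (2 * n + 1))
        ((n + (i + 1) : ℕ) : Fin (2 * n + 1))).prod)

/-- The longest element `w₀` of the symmetric group on `{0, 1, …, 2n}`: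
the reversal `i ↦ 2n − i`. -/
def wA (n : ℕ) : Equiv.Perm (Fin (2 * n + 1)) := Fin.revPerm

/-!
An involution `u` commuting with `w₀` turns `{0, …, 2n}` into a set with an action of the Klein
four-group `⟨u, w₀⟩`, and a permutation commuting with `w₀` that conjugates `c_{k,l}` to `u` is
exactly an isomorphism between the two actions. Finite sets with an action of a finite abelian
group are classified by how many points have each stabilizer. Here the stabilizer of `x` only
depends on whether `u x = x` and whether `u x = w₀ x`; besides the centre `n`, `c_{k,l}` has
`2 l` points with `u x = w₀ x ≠ x` and `4 k` points with trivial stabilizer, and these two counts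
pin down `(k, l)`.
-/

open Equiv MulAction

namespace MulAction

variable {G X Y : Type*} [CommGroup G] [MulAction G X] [MulAction G Y]

theorem stabilizer_eq_of_mem_orbit {x y : X} (h : y ∈ orbit G x) :
    stabilizer G y = stabilizer G x := by
  obtain ⟨g, rfl⟩ := h
  ext h
  rw [mem_stabilizer_iff, mem_stabilizer_iff, smul_smul, mul_comm, mul_smul, smul_left_cancel_iff]

theorem stabilizer_out_mk (x : X) :
    stabilizer G (⟦x⟧ : orbitRel.Quotient G X).out = stabilizer G x :=
  stabilizer_eq_of_mem_orbit (orbitRel_apply.mp (Quotient.mk_out x))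

theorem card_stabilizer_eq_mul_index (H : Subgroup G) :
    Nat.card {x : X // stabilizer G x = H} =
      Nat.card {ω : orbitRel.Quotient G X // stabilizer G ω.out = H} * H.index := by
  calc Nat.card {x : X // stabilizer G x = H}
      = Nat.card {s : Σ ω : orbitRel.Quotient G X, G ⧸ stabilizer G ω.out //
          stabilizer G s.1.out = H} :=
        Nat.card_congr ((selfEquivSigmaOrbitsQuotientStabilizer G X).subtypeEquiv fun x => by
          rw [← stabilizer_out_mk x]; rfl)
    _ = Nat.card (Σ ω : {ω : orbitRel.Quotient G X // stabilizer G ω.out = H},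
          G ⧸ stabilizer G ω.1.out) :=
        Nat.card_congr <| subtypeSigmaEquiv
          (fun ω : orbitRel.Quotient G X => G ⧸ stabilizer G ω.out) (stabilizer G ·.out = H)
    _ = _ := by
        rw [Nat.card_congr (sigmaEquivProdOfEquiv fun ω => Subgroup.quotientEquivOfEq ω.2),
          Nat.card_prod]
        rfl

variable [Finite G] [Finite X] [Finite Y]

theorem exists_equiv_smul_of_stabilizer_eq (e : X ≃ Y)
    (he : ∀ x, stabilizer G (e x) = stabilizer G x) :
    ∃ f : X ≃ Y, ∀ (g : G) (x : X), f (g • x) = g • f x := by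
  have hcard : ∀ H : Subgroup G,
      Nat.card {ω : orbitRel.Quotient G X // stabilizer G ω.out = H} =
        Nat.card {ω : orbitRel.Quotient G Y // stabilizer G ω.out = H} := by
    intro H
    apply Nat.eq_of_mul_eq_mul_right (Nat.pos_of_ne_zero H.index_ne_zero_of_finite)
    rw [← card_stabilizer_eq_mul_index, ← card_stabilizer_eq_mul_index]
    exact Nat.card_congr (e.subtypeEquiv fun x => by rw [he])
  -- match orbits with equal stabilizers, then send `g • ω.out` to `g • (ψ ω).out`
  let ψ := Equiv.ofFiberEquiv fun H => (Finite.card_eq.mp (hcard H)).some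
  have hψ : ∀ ω, stabilizer G (ψ ω).out = stabilizer G ω.out :=
    Equiv.ofFiberEquiv_map (g := fun ω : orbitRel.Quotient G Y => stabilizer G ω.out) _
  let DX := selfEquivSigmaOrbitsQuotientStabilizer G X
  let DY := selfEquivSigmaOrbitsQuotientStabilizer G Y
  refine ⟨DX.trans ((Equiv.sigmaCongr ψ
    fun ω => Subgroup.quotientEquivOfEq (hψ ω).symm).trans DY.symm), fun g x => ?_⟩
  obtain ⟨⟨ω, q⟩, rfl⟩ := DX.symm.surjective x
  induction q using QuotientGroup.induction_on with | H h =>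
  have hX : ∀ h : G, DX.symm ⟨ω, (h : G ⧸ _)⟩ = h • ω.out := fun _ => rfl
  have hY : ∀ h : G, DY.symm ⟨ψ ω, (h : G ⧸ _)⟩ = h • (ψ ω).out := fun _ => rfl
  rw [hX, smul_smul, ← hX, ← hX]
  simp only [Equiv.trans_apply, Equiv.apply_symm_apply]
  show DY.symm ⟨ψ ω, ((g * h : G) : G ⧸ _)⟩ = g • DY.symm ⟨ψ ω, (h : G ⧸ _)⟩
  rw [hY, hY, mul_smul]

end MulAction

theorem exists_intertwining_equiv {G X Y : Type*} [CommGroup G] [Finite G] [Finite X]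
    [Finite Y] (φ : G →* Perm X) (ψ : G →* Perm Y) (e : X ≃ Y)
    (he : ∀ g x, ψ g (e x) = e x ↔ φ g x = x) :
    ∃ f : X ≃ Y, ∀ g x, f (φ g x) = ψ g (f x) :=
  let _ := MulAction.compHom X φ
  let _ := MulAction.compHom Y ψ
  MulAction.exists_equiv_smul_of_stabilizer_eq e fun x => Subgroup.ext fun g => he g x

abbrev KleinFour := Multiplicative (ZMod 2) × Multiplicative (ZMod 2)

def zmodTwoHom {M : Type*} [Monoid M] (a : M) (ha : a * a = 1) :
    Multiplicative (ZMod 2) →* M where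
  toFun p := a ^ (Multiplicative.toAdd p).val
  map_one' := pow_zero a
  map_mul' p q := by
    have h2 : ∀ m, a ^ (m % 2) = a ^ m := fun m => by
      conv_rhs => rw [← Nat.mod_add_div m 2, pow_add, pow_mul, sq, ha, one_pow, mul_one]
    simp only [toAdd_mul, ZMod.val_add, h2, pow_add]

theorem zmodTwoHom_ofAdd_one {M : Type*} [Monoid M] (a : M) (ha : a * a = 1) :
    zmodTwoHom a ha (.ofAdd 1) = a :=
  pow_one a

def kleinHom {M : Type*} [Monoid M] (a b : M) (ha : a * a = 1) (hb : b * b = 1)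
    (hab : Commute a b) : KleinFour →* M :=
  (zmodTwoHom a ha).noncommCoprod (zmodTwoHom b hb) fun p q =>
    show Commute (zmodTwoHom a ha p) (zmodTwoHom b hb q) from hab.pow_pow _ _

theorem kleinHom_ofAdd_one_one {M : Type*} [Monoid M] (a b : M) (ha : a * a = 1) (hb : b * b = 1)
    (hab : Commute a b) : kleinHom a b ha hb hab (.ofAdd 1, 1) = a := by
  simp [kleinHom, zmodTwoHom_ofAdd_one]

theorem kleinHom_one_ofAdd_one {M : Type*} [Monoid M] (a b : M) (ha : a * a = 1) (hb : b * b = 1)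
    (hab : Commute a b) : kleinHom a b ha hb hab (1, .ofAdd 1) = b := by
  simp [kleinHom, zmodTwoHom_ofAdd_one]

theorem Equiv.Perm.apply_apply_of_mul_self_eq_one {X : Type*} {σ : Perm X} (h : σ * σ = 1)
    (x : X) : σ (σ x) = x := by
  rw [← Perm.mul_apply, h, Perm.one_apply]

section
variable {X : Type*} {u w : Perm X}

theorem kleinHom_apply_eq_self_iff (hu : u * u = 1) (hw : w * w = 1) (huw : Commute u w)
    (hfix : ∀ x, w x = x → u x = x) (g : KleinFour) (x : X) :
    kleinHom u w hu hw huw g x = x ↔ (g.2 = 1 ∨ u x = w x) ∧ (g.1 = g.2 ∨ u x = x) := by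
  have huu := Perm.apply_apply_of_mul_self_eq_one hu
  have hne : (1 : Multiplicative (ZMod 2)) ≠ .ofAdd 1 := by decide
  obtain ⟨p, q⟩ := g
  rw [kleinHom, MonoidHom.noncommCoprod_apply, Perm.mul_apply]
  obtain rfl | rfl : p = 1 ∨ p = .ofAdd 1 := (by decide +revert)
  all_goals obtain rfl | rfl : q = 1 ∨ q = .ofAdd 1 := (by decide +revert)
  all_goals simp only [map_one, zmodTwoHom_ofAdd_one, Perm.coe_one, id_eq, hne, hne.symm,
    true_or, false_or, true_and, and_true, and_self]
  · exact ⟨fun h => ⟨h.symm ▸ hfix x h, hfix x h⟩, fun h => h.1 ▸ h.2⟩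
  · exact ⟨fun h => (congrArg u h).symm.trans (huu (w x)), fun h => by rw [← h, huu]⟩

theorem kleinHom_mem_stabilizer_iff (hu : u * u = 1) (hw : w * w = 1) (huw : Commute u w)
    (hfix : ∀ x, w x = x → u x = x) (g : KleinFour) (x : X) :
    letI := MulAction.compHom X (kleinHom u w hu hw huw)
    g ∈ stabilizer KleinFour x ↔ (g.2 = 1 ∨ u x = w x) ∧ (g.1 = g.2 ∨ u x = x) :=
  kleinHom_apply_eq_self_iff hu hw huw hfix g x

variable [DecidableEq X]

/-- When `u` fixes the fixed points of `w`, the kinds are: `(true, true)` the fixed points of `w`,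
`(true, false)` the other fixed points of `u`, `(false, true)` the points where `u` acts as `w`,
`(false, false)` the points with trivial stabilizer in `⟨u, w⟩`. -/
def pointKind (u w : Perm X) (x : X) : Bool × Bool := (decide (u x = x), decide (u x = w x))

theorem kleinHom_stabilizer_eq_iff (hu : u * u = 1) (hw : w * w = 1) (huw : Commute u w)
    (hfix : ∀ x, w x = x → u x = x) (x y : X) :
    letI := MulAction.compHom X (kleinHom u w hu hw huw)
    stabilizer KleinFour y = stabilizer KleinFour x ↔ pointKind u w y = pointKind u w x := by
  let _ := MulAction.compHom X (kleinHom u w hu hw huw)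
  have hmem := kleinHom_mem_stabilizer_iff hu hw huw hfix
  simp only [pointKind, Prod.mk.injEq, decide_eq_decide]
  constructor
  · intro h
    have key : ∀ g : KleinFour, (g.2 = 1 ∨ u y = w y) ∧ (g.1 = g.2 ∨ u y = y) ↔
        (g.2 = 1 ∨ u x = w x) ∧ (g.1 = g.2 ∨ u x = x) := fun g =>
      (hmem g y).symm.trans ((SetLike.ext_iff.mp h g).trans (hmem g x))
    have hfixed := key (.ofAdd 1, 1)
    have hflip := key (.ofAdd 1, .ofAdd 1)
    simp only [true_or, ofAdd_eq_one, one_ne_zero, false_or, true_and, and_true] at hfixed hflip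
    exact ⟨hfixed, hflip⟩
  · rintro ⟨hfixed, hflip⟩
    ext g
    rw [hmem, hmem, hfixed, hflip]

theorem dvd_card_pointKind (hu : u * u = 1) (hw : w * w = 1) (huw : Commute u w)
    (hfix : ∀ x, w x = x → u x = x) :
    4 ∣ Nat.card {x // pointKind u w x = (false, false)} ∧
      2 ∣ Nat.card {x // pointKind u w x = (false, true)} := by
  let _ := MulAction.compHom X (kleinHom u w hu hw huw)
  have hmem := kleinHom_mem_stabilizer_iff hu hw huw hfix
  -- a kind is a union of orbits, each of size `(stabilizer KleinFour x).index`
  have hdvd : ∀ t m, (∀ x, pointKind u w x = t → (stabilizer KleinFour x).index = m) →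
      m ∣ Nat.card {x // pointKind u w x = t} := by
    intro t m hm
    by_cases ht : ∃ x, pointKind u w x = t
    · obtain ⟨x, rfl⟩ := ht
      rw [← hm x rfl, ← Nat.card_congr (Equiv.subtypeEquivRight fun y =>
        kleinHom_stabilizer_eq_iff hu hw huw hfix x y), card_stabilizer_eq_mul_index]
      exact dvd_mul_left _ _
    · have : IsEmpty {x // pointKind u w x = t} := ⟨fun y => ht ⟨y.1, y.2⟩⟩
      rw [Nat.card_of_isEmpty]
      exact dvd_zero m
  refine ⟨hdvd _ 4 fun x hx => ?_, hdvd _ 2 fun x hx => ?_⟩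
  · simp only [pointKind, Prod.mk.injEq, decide_eq_false_iff_not] at hx
    have : stabilizer KleinFour x = ⊥ := by
      ext g
      rw [Subgroup.mem_bot, hmem]
      simp only [hx, or_false]
      revert g
      decide
    rw [this, Subgroup.index_bot]
    simp
  · simp only [pointKind, Prod.mk.injEq, decide_eq_false_iff_not, decide_eq_true_eq] at hx
    -- the stabilizer is `{1, u w}`, and `u` represents the other coset
    refine Subgroup.index_eq_two_iff.mpr ⟨(.ofAdd 1, 1), fun g => ?_⟩
    have hwx : w x ≠ x := hx.2 ▸ hx.1
    rw [hmem, hmem]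
    simp only [hx.2, hwx, or_true, true_and, or_false]
    revert g
    decide

theorem pointKind_conj_apply {g v : Perm X} (hgw : Commute g w) (x : X) :
    pointKind (g * v * g⁻¹) w (g x) = pointKind v w x := by
  have hwg : w (g x) = g (w x) := (Perm.ext_iff.mp hgw x).symm
  simp only [pointKind, Perm.mul_apply, Perm.coe_inv, symm_apply_apply, hwg, g.injective.eq_iff]

theorem pointKind_eq_true_true_iff (hfix : ∀ x, w x = x → u x = x) (x : X) :
    pointKind u w x = (true, true) ↔ w x = x := by
  simp only [pointKind, Prod.mk.injEq, decide_eq_true_eq]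
  exact ⟨fun h => h.2 ▸ h.1, fun h => ⟨hfix x h, (hfix x h).trans h.symm⟩⟩

theorem card_eq_sum_card_pointKind [Finite X] (u w : Perm X) :
    Nat.card X = Nat.card {x // pointKind u w x = (true, true)} +
      Nat.card {x // pointKind u w x = (true, false)} +
      Nat.card {x // pointKind u w x = (false, true)} +
      Nat.card {x // pointKind u w x = (false, false)} := by
  rw [← Nat.card_congr (Equiv.sigmaFiberEquiv (pointKind u w)), Nat.card_sigma,
    Fintype.sum_prod_type, Fintype.sum_bool, Fintype.sum_bool, Fintype.sum_bool]
  ring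

theorem exists_commute_conj_eq_iff [Finite X] {v : Perm X} (hu : u * u = 1) (hv : v * v = 1)
    (hw : w * w = 1) (huw : Commute u w) (hvw : Commute v w) (hufix : ∀ x, w x = x → u x = x)
    (hvfix : ∀ x, w x = x → v x = x) :
    (∃ g : Perm X, Commute g w ∧ u = g * v * g⁻¹) ↔
      Nat.card {x // pointKind u w x = (false, false)} =
          Nat.card {x // pointKind v w x = (false, false)} ∧
        Nat.card {x // pointKind u w x = (false, true)} =
          Nat.card {x // pointKind v w x = (false, true)} := by
  constructor
  · rintro ⟨g, hgw, rfl⟩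
    have hcard : ∀ t, Nat.card {x // pointKind (g * v * g⁻¹) w x = t} =
        Nat.card {x // pointKind v w x = t} := fun t =>
      (Nat.card_congr (g.subtypeEquiv fun x => by rw [pointKind_conj_apply hgw])).symm
    exact ⟨hcard _, hcard _⟩
  · rintro ⟨hfree, hflip⟩
    have hcenter : ∀ {σ : Perm X}, (∀ x, w x = x → σ x = x) →
        Nat.card {x // pointKind σ w x = (true, true)} = Nat.card {x // w x = x} := fun hσ =>
      Nat.card_congr (Equiv.subtypeEquivRight (pointKind_eq_true_true_iff hσ))
    have hcard : ∀ t, Nat.card {x // pointKind v w x = t} =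
        Nat.card {x // pointKind u w x = t} := by
      have hu_sum := card_eq_sum_card_pointKind u w
      have hv_sum := card_eq_sum_card_pointKind v w
      have := hcenter hufix
      have := hcenter hvfix
      rintro ⟨_ | _, _ | _⟩ <;> omega
    let e := Equiv.ofFiberEquiv fun t => (Finite.card_eq.mp (hcard t)).some
    have he : ∀ x, pointKind u w (e x) = pointKind v w x := Equiv.ofFiberEquiv_map _
    obtain ⟨f, hf⟩ := exists_intertwining_equiv (kleinHom v w hv hw hvw)
      (kleinHom u w hu hw huw) e fun g x => by
        have hex := he x
        simp only [pointKind, Prod.mk.injEq, decide_eq_decide] at hex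
        rw [kleinHom_apply_eq_self_iff hu hw huw hufix,
          kleinHom_apply_eq_self_iff hv hw hvw hvfix, hex.1, hex.2]
    have hfv := hf (.ofAdd 1, 1)
    have hfw := hf (1, .ofAdd 1)
    simp only [kleinHom_ofAdd_one_one, kleinHom_one_ofAdd_one] at hfv hfw
    refine ⟨f, Perm.ext hfw, ?_⟩
    rw [eq_mul_inv_iff_mul_eq]
    exact (Perm.ext hfv).symm

end

open Fin.NatCast

theorem Fin.val_swap_natCast {N a b : ℕ} [NeZero N] (ha : a < N) (hb : b < N) (x : Fin N) :
    (swap (a : Fin N) (b : Fin N) x).val =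
      if x.val = a then b else if x.val = b then a else x.val := by
  rw [swap_apply_def]
  simp only [Fin.ext_iff, Fin.val_cast_of_lt ha, Fin.val_cast_of_lt hb]
  split_ifs <;> simp [Fin.val_cast_of_lt ha, Fin.val_cast_of_lt hb]

theorem val_prod_swap_mirror {n l : ℕ} (hl : l ≤ n) (x : Fin (2 * n + 1)) :
    (((List.range l).map fun i =>
      Equiv.swap ((n - (i + 1) : ℕ) : Fin (2 * n + 1))
        ((n + (i + 1) : ℕ) : Fin (2 * n + 1))).prod x).val =
      if n - l ≤ x.val ∧ x.val ≤ n + l then 2 * n - x.val else x.val := by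
  induction l generalizing x with
  | zero =>
    rw [List.range_zero, List.map_nil, List.prod_nil, Perm.one_apply]
    split_ifs <;> omega
  | succ l ih =>
    rw [List.range_succ, List.map_append, List.prod_append, List.map_singleton,
      List.prod_singleton, Perm.mul_apply, ih (by omega),
      Fin.val_swap_natCast (by omega) (by omega)]
    have := x.isLt
    split_ifs <;> omega

theorem val_prod_swap_pairs {n k : ℕ} (hk : 2 * k ≤ n) (x : Fin (2 * n + 1)) :
    (((List.range k).map fun j =>
      Equiv.swap ((2 * j : ℕ) : Fin (2 * n + 1)) ((2 * j + 1 : ℕ) : Fin (2 * n + 1)) *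
      Equiv.swap ((2 * n - 2 * j - 1 : ℕ) : Fin (2 * n + 1))
        ((2 * n - 2 * j : ℕ) : Fin (2 * n + 1))).prod x).val =
      if x.val < 2 * k then (if x.val % 2 = 0 then x.val + 1 else x.val - 1)
      else if 2 * n - 2 * k < x.val then (if x.val % 2 = 0 then x.val - 1 else x.val + 1)
      else x.val := by
  induction k generalizing x with
  | zero =>
    rw [List.range_zero, List.map_nil, List.prod_nil, Perm.one_apply]
    split_ifs <;> omega
  | succ k ih =>
    rw [List.range_succ, List.map_append, List.prod_append, List.map_singleton,
      List.prod_singleton, Perm.mul_apply, ih (by omega), Perm.mul_apply,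
      Fin.val_swap_natCast (by omega) (by omega), Fin.val_swap_natCast (by omega) (by omega)]
    have := x.isLt
    split_ifs <;> omega

theorem val_cA {n k l : ℕ} (hkl : 2 * k + l ≤ n) (x : Fin (2 * n + 1)) :
    (cA n k l x).val =
      if x.val < 2 * k then (if x.val % 2 = 0 then x.val + 1 else x.val - 1)
      else if 2 * n - 2 * k < x.val then (if x.val % 2 = 0 then x.val - 1 else x.val + 1)
      else if n - l ≤ x.val ∧ x.val ≤ n + l then 2 * n - x.val else x.val := by
  rw [cA, Perm.mul_apply, val_prod_swap_pairs (by omega), val_prod_swap_mirror (by omega)]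
  have := x.isLt
  split_ifs <;> omega

theorem cA_mul_self {n k l : ℕ} (hkl : 2 * k + l ≤ n) : cA n k l * cA n k l = 1 := by
  refine Equiv.ext fun x => Fin.ext ?_
  rw [Perm.mul_apply, Perm.one_apply, val_cA hkl (cA n k l x), val_cA hkl x]
  have := x.isLt
  split_ifs <;> omega

theorem cA_commute_wA {n k l : ℕ} (hkl : 2 * k + l ≤ n) : Commute (cA n k l) (wA n) := by
  refine Equiv.ext fun x => Fin.ext ?_
  rw [Perm.mul_apply, Perm.mul_apply, wA, Fin.revPerm_apply, Fin.revPerm_apply, val_cA hkl,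
    Fin.val_rev, Fin.val_rev, val_cA hkl]
  have := x.isLt
  split_ifs <;> omega

theorem Fin.card_subtype_val {N : ℕ} (P : ℕ → Prop) [DecidablePred P] :
    Nat.card {x : Fin N // P x.val} = ((Finset.range N).filter P).card := by
  rw [Nat.card_eq_fintype_card, Fintype.card_subtype, ← Nat.Iio_eq_range,
    ← Fin.map_valEmbedding_univ, Finset.filter_map, Finset.card_map]
  rfl

section
variable {n k l : ℕ}

theorem pointKind_cA_eq_false_false_iff (hkl : 2 * k + l ≤ n) (x : Fin (2 * n + 1)) :
    pointKind (cA n k l) (wA n) x = (false, false) ↔ x.val < 2 * k ∨ 2 * n - 2 * k < x.val := by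
  simp only [pointKind, Prod.mk.injEq, decide_eq_false_iff_not, Fin.ext_iff, val_cA hkl, wA,
    Fin.revPerm_apply, Fin.val_rev]
  have := x.isLt
  split_ifs <;> omega

theorem pointKind_cA_eq_false_true_iff (hkl : 2 * k + l ≤ n) (x : Fin (2 * n + 1)) :
    pointKind (cA n k l) (wA n) x = (false, true) ↔
      n - l ≤ x.val ∧ x.val ≤ n + l ∧ x.val ≠ n := by
  simp only [pointKind, Prod.mk.injEq, decide_eq_false_iff_not, decide_eq_true_eq, Fin.ext_iff,
    val_cA hkl, wA, Fin.revPerm_apply, Fin.val_rev]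
  have := x.isLt
  split_ifs <;> omega

theorem card_pointKind_cA_false_false (hkl : 2 * k + l ≤ n) :
    Nat.card {x // pointKind (cA n k l) (wA n) x = (false, false)} = 4 * k := by
  rw [Nat.card_congr (Equiv.subtypeEquivRight (pointKind_cA_eq_false_false_iff hkl)),
    Fin.card_subtype_val fun m => m < 2 * k ∨ 2 * n - 2 * k < m]
  have hsplit : (Finset.range (2 * n + 1)).filter (fun m => m < 2 * k ∨ 2 * n - 2 * k < m) =
      Finset.range (2 * k) ∪ Finset.Ioo (2 * n - 2 * k) (2 * n + 1) := by
    ext m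
    simp only [Finset.mem_filter, Finset.mem_range, Finset.mem_union, Finset.mem_Ioo]
    omega
  rw [hsplit, Finset.card_union_of_disjoint, Finset.card_range, Nat.card_Ioo]
  · omega
  · rw [Finset.disjoint_left]
    simp only [Finset.mem_range, Finset.mem_Ioo]
    omega

theorem card_pointKind_cA_false_true (hkl : 2 * k + l ≤ n) :
    Nat.card {x // pointKind (cA n k l) (wA n) x = (false, true)} = 2 * l := by
  rw [Nat.card_congr (Equiv.subtypeEquivRight (pointKind_cA_eq_false_true_iff hkl)),
    Fin.card_subtype_val fun m => n - l ≤ m ∧ m ≤ n + l ∧ m ≠ n]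
  have hsplit : (Finset.range (2 * n + 1)).filter (fun m => n - l ≤ m ∧ m ≤ n + l ∧ m ≠ n) =
      Finset.Ico (n - l) n ∪ Finset.Ioc n (n + l) := by
    ext m
    simp only [Finset.mem_filter, Finset.mem_range, Finset.mem_union, Finset.mem_Ico,
      Finset.mem_Ioc]
    omega
  rw [hsplit, Finset.card_union_of_disjoint, Nat.card_Ico, Nat.card_Ioc]
  · omega
  · rw [Finset.disjoint_left]
    simp only [Finset.mem_Ico, Finset.mem_Ioc]
    omega

end

theorem wA_mul_self (n : ℕ) : wA n * wA n = 1 :=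
  Equiv.ext Fin.rev_rev

theorem apply_eq_self_of_commute_wA {n : ℕ} {σ : Perm (Fin (2 * n + 1))} (hσ : Commute σ (wA n))
    {x : Fin (2 * n + 1)} (hx : wA n x = x) : σ x = x := by
  have hcenter : ∀ y : Fin (2 * n + 1), wA n y = y → y.val = n := fun y hy => by
    have := congrArg Fin.val hy
    rw [wA, Fin.revPerm_apply, Fin.val_rev] at this
    omega
  have hσx : wA n (σ x) = σ x := by rw [← Perm.mul_apply, ← hσ.eq, Perm.mul_apply, hx]
  exact Fin.ext ((hcenter _ hσx).trans (hcenter _ hx).symm)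

theorem card_pointKind_false_false_add_false_true_le {n : ℕ} {u : Perm (Fin (2 * n + 1))}
    (hu : Commute u (wA n)) :
    Nat.card {x // pointKind u (wA n) x = (false, false)} +
      Nat.card {x // pointKind u (wA n) x = (false, true)} ≤ 2 * n := by
  have hsum := card_eq_sum_card_pointKind u (wA n)
  have hcenter : 0 < Nat.card {x // pointKind u (wA n) x = (true, true)} := by
    have hfix : wA n ⟨n, by omega⟩ = ⟨n, by omega⟩ :=
      Fin.ext (by rw [wA, Fin.revPerm_apply, Fin.val_rev]; dsimp only; omega)
    have : Nonempty {x // pointKind u (wA n) x = (true, true)} :=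
      ⟨⟨_, (pointKind_eq_true_true_iff (fun _ => apply_eq_self_of_commute_wA hu) _).mpr hfix⟩⟩
    exact Nat.card_pos
  rw [Nat.card_eq_fintype_card, Fintype.card_fin] at hsum
  omega

theorem stmt3_general (n : ℕ)
    (u : Equiv.Perm (Fin (2 * n + 1)))
    (hu2 : u * u = 1)
    (hucomm : u * wA n = wA n * u) :
    ∃! p : ℕ × ℕ, 2 * p.1 + p.2 ≤ n ∧
      ∃ g : Equiv.Perm (Fin (2 * n + 1)),
        g * wA n = wA n * g ∧ u = g * cA n p.1 p.2 * g⁻¹ := by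
  have hufix : ∀ x, wA n x = x → u x = x := fun _ => apply_eq_self_of_commute_wA hucomm
  have hconj : ∀ p : ℕ × ℕ, 2 * p.1 + p.2 ≤ n →
      ((∃ g : Perm (Fin (2 * n + 1)), g * wA n = wA n * g ∧ u = g * cA n p.1 p.2 * g⁻¹) ↔
        Nat.card {x // pointKind u (wA n) x = (false, false)} = 4 * p.1 ∧
          Nat.card {x // pointKind u (wA n) x = (false, true)} = 2 * p.2) := fun p hp => by
    rw [← card_pointKind_cA_false_false hp, ← card_pointKind_cA_false_true hp]
    exact exists_commute_conj_eq_iff hu2 (cA_mul_self hp) (wA_mul_self n) hucomm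
      (cA_commute_wA hp) hufix fun _ => apply_eq_self_of_commute_wA (cA_commute_wA hp)
  obtain ⟨⟨k, hk⟩, ⟨l, hl⟩⟩ := dvd_card_pointKind hu2 (wA_mul_self n) hucomm hufix
  have hkl : 2 * k + l ≤ n := by
    have := card_pointKind_false_false_add_false_true_le hucomm
    omega
  refine ⟨(k, l), ⟨hkl, (hconj (k, l) hkl).mpr ⟨hk, hl⟩⟩, fun p ⟨hp, hg⟩ => ?_⟩
  obtain ⟨hk', hl'⟩ := (hconj p hp).mp hg
  exact Prod.ext (by dsimp only; omega) (by dsimp only; omega)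

/-- For every permutation `u` of `{0,1,…,2n}` with `u² = 1` and `u ∘ w₀ = w₀ ∘ u`, there
exists exactly one pair `(k,l)` of integers with `k, l ≥ 0` and `2k + l ≤ n` such that
`u = g ∘ c_{k,l} ∘ g⁻¹` for some permutation `g` of `{0,1,…,2n}` commuting with `w₀`. -/
theorem stmt3 (n : ℕ) (hn : 1 ≤ n)
    (u : Equiv.Perm (Fin (2 * n + 1)))
    (hu2 : u * u = 1)
    (hucomm : u * wA n = wA n * u) :
    ∃! p : ℕ × ℕ, 2 * p.1 + p.2 ≤ n ∧
      ∃ g : Equiv.Perm (Fin (2 * n + 1)),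
        g * wA n = wA n * g ∧ u = g * cA n p.1 p.2 * g⁻¹ :=
  stmt3_general n u hu2 hucomm
end

section
/- For all integers k,l ≥ 0 with 2k + l ≤ n, the permutation w₀ ∘ c_{k,l} is an involution and is conjugate to c_{k, n−2k−l} by an element of the centralizer of w₀ in S_{2n}; that is, there exists g ∈ S_{2n} with g∘w₀ = w₀∘g and w₀ ∘ c_{k,l} = g ∘ c_{k,n−2k−l} ∘ g⁻¹. -/
/-!
Everything is computed on values in `{0, …, 2n−1}`, split into the outer blocks
`[0, 2k) ∪ [2n−2k, 2n)` and the middle `[2k, 2n−2k)`, which all permutations involved preserve.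
On the outer blocks `c_{k,l}` swaps adjacent pairs, so `w₀ c_{k,l}` pairs `2j ↔ 2n−2−2j` and
`2j+1 ↔ 2n−1−2j`; a conjugator there fixes the even points below `n`, the odd points above `n`,
and sends the remaining points to their mirror images. On the middle `c_{k,l}` reverses the window
`[n−l, n+l)`, so `w₀ c_{k,l}` fixes the window and reverses the rest; translating `[2k, 2k+l)`
onto `[n−l, n)` and `[2k+l, n)` onto `[2k, n−l)`, mirrored above `n`, carries
`c_{k,n−2k−l}` to it and commutes with `w₀`. Being conjugate to the involution `c_{k,n−2k−l}`,
`w₀ c_{k,l}` is an involution.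
-/

open Fin.NatCast

/-- The involution `c_{k,l}` in the symmetric group on `{0, 1, …, 2n−1}`: it swaps
`2j ↔ 2j+1` and `2n−2−2j ↔ 2n−1−2j` for each `0 ≤ j < k`, swaps `n−1−i ↔ n+i` for each
integer `i` with `0 ≤ i < l`, and fixes all other points.  (Here it is written as a
product of the corresponding disjoint transpositions.) -/
def cA' (n : ℕ) (hn : 0 < n) (k l : ℕ) : Equiv.Perm (Fin (2 * n)) :=
  haveI : NeZero (2 * n) := ⟨by omega⟩
  (((List.range k).map fun j =>
      Equiv.swap ((2 * j : ℕ) : Fin (2 * n)) ((2 * j + 1 : ℕ) : Fin (2 * n)) *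
      Equiv.swap ((2 * n - 2 - 2 * j : ℕ) : Fin (2 * n))
        ((2 * n - 1 - 2 * j : ℕ) : Fin (2 * n))).prod) *
  (((List.range l).map fun i =>
      Equiv.swap ((n - 1 - i : ℕ) : Fin (2 * n)) ((n + i : ℕ) : Fin (2 * n))).prod)

/-- The longest element `w₀` of the symmetric group on `{0, 1, …, 2n−1}`:
the reversal `i ↦ 2n−1−i`. -/
def wA' (n : ℕ) : Equiv.Perm (Fin (2 * n)) := Fin.revPerm

theorem Equiv.Perm.apply_prod_map_range_of_succ {α β : Type*} (f : ℕ → Equiv.Perm α)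
    (v : α → β) (F : ℕ → α → β) {m : ℕ} (h₀ : ∀ x, F 0 x = v x)
    (hsucc : ∀ j < m, ∀ x, F (j + 1) x = F j (f j x)) (x : α) :
    v (((List.range m).map f).prod x) = F m x := by
  induction m generalizing x with
  | zero => simp [h₀]
  | succ m ih =>
    rw [List.range_succ, List.map_append, List.prod_append, List.map_singleton,
      List.prod_singleton, Equiv.Perm.mul_apply, hsucc m m.lt_succ_self,
      ih fun j hj => hsucc j (hj.trans m.lt_succ_self)]

theorem Fin.val_swap_natCast_apply {N : ℕ} [NeZero N] {a b : ℕ} (ha : a < N) (hb : b < N)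
    (x : Fin N) :
    (Equiv.swap (a : Fin N) (b : Fin N) x).val = if x.val = a then b else if x.val = b then a
      else x.val := by
  rw [Equiv.swap_apply_def]
  split_ifs <;> simp_all [Fin.ext_iff, Fin.val_natCast, Nat.mod_eq_of_lt ha, Nat.mod_eq_of_lt hb]

-- an `abbrev`, so that `if`s on it use the `Or` instance and still split after unfolding
abbrev IsOuter (n k x : ℕ) : Prop := x < 2 * k ∨ 2 * n - 2 * k ≤ x

def pairVal (x : ℕ) : ℕ := if x % 2 = 0 then x + 1 else x - 1

def windowRevVal (n l x : ℕ) : ℕ := if n - l ≤ x ∧ x < n + l then 2 * n - 1 - x else x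

def cVal (n k l x : ℕ) : ℕ := if IsOuter n k x then pairVal x else windowRevVal n l x

section Values

variable {n : ℕ} [NeZero (2 * n)]

theorem val_prod_pairSwaps_apply {k : ℕ} (hk : 2 * k ≤ n) (x : Fin (2 * n)) :
    ((((List.range k).map fun j =>
        Equiv.swap ((2 * j : ℕ) : Fin (2 * n)) ((2 * j + 1 : ℕ) : Fin (2 * n)) *
        Equiv.swap ((2 * n - 2 - 2 * j : ℕ) : Fin (2 * n))
          ((2 * n - 1 - 2 * j : ℕ) : Fin (2 * n))).prod) x).val =
      if IsOuter n k x.val then pairVal x.val else x.val := by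
  refine Equiv.Perm.apply_prod_map_range_of_succ _ _
    (fun j y => if IsOuter n j y.val then pairVal y.val else y.val) (fun y => ?_)
    (fun j hj y => ?_) x
  · simp only [IsOuter]
    split_ifs <;> omega
  · have := y.isLt
    rw [Equiv.Perm.mul_apply, Fin.val_swap_natCast_apply (by omega) (by omega),
      Fin.val_swap_natCast_apply (by omega) (by omega)]
    simp only [IsOuter, pairVal]
    split_ifs <;> omega

theorem val_prod_windowSwaps_apply {l : ℕ} (hl : l ≤ n) (x : Fin (2 * n)) :
    ((((List.range l).map fun i =>
        Equiv.swap ((n - 1 - i : ℕ) : Fin (2 * n)) ((n + i : ℕ) : Fin (2 * n))).prod) x).val =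
      windowRevVal n l x.val := by
  refine Equiv.Perm.apply_prod_map_range_of_succ _ _ (fun i y => windowRevVal n i y.val)
    (fun y => ?_) (fun i hi y => ?_) x
  · simp only [windowRevVal]
    split_ifs <;> omega
  · have := y.isLt
    rw [Fin.val_swap_natCast_apply (by omega) (by omega)]
    simp only [windowRevVal]
    split_ifs <;> omega

end Values

theorem val_cA'_apply {n : ℕ} (hn : 0 < n) {k l : ℕ} (hkl : 2 * k + l ≤ n) (x : Fin (2 * n)) :
    (cA' n hn k l x).val = cVal n k l x.val := by
  have : NeZero (2 * n) := ⟨by omega⟩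
  have := x.isLt
  rw [cA', Equiv.Perm.mul_apply, val_prod_pairSwaps_apply (by omega),
    val_prod_windowSwaps_apply (by omega)]
  simp only [cVal, IsOuter, windowRevVal]
  split_ifs <;> omega

theorem val_wA'_apply {n : ℕ} (x : Fin (2 * n)) : (wA' n x).val = 2 * n - 1 - x.val := by
  simp only [wA', Fin.revPerm_apply, Fin.val_rev]
  omega

theorem cA'_mul_self {n : ℕ} (hn : 0 < n) {k l : ℕ} (hkl : 2 * k + l ≤ n) :
    cA' n hn k l * cA' n hn k l = 1 := by
  ext x
  have := x.isLt
  rw [Equiv.Perm.mul_apply, val_cA'_apply hn hkl, val_cA'_apply hn hkl, Equiv.Perm.one_apply]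
  simp only [cVal, IsOuter, pairVal, windowRevVal]
  split_ifs <;> omega

def outerConjVal (n x : ℕ) : ℕ :=
  if x < n then (if x % 2 = 0 then x else 2 * n - 1 - x)
  else (if x % 2 = 0 then 2 * n - 1 - x else x)

def middleConjVal (n k l x : ℕ) : ℕ :=
  if x < 2 * k + l then x + (n - 2 * k - l)
  else if x < n then x - l
  else if x < 2 * n - 2 * k - l then x + l
  else x - (n - 2 * k - l)

def conjVal (n k l x : ℕ) : ℕ :=
  if IsOuter n k x then outerConjVal n x else middleConjVal n k l x

section Conjugator

variable {n k l x : ℕ}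

theorem isOuter_pairVal (hk : 2 * k ≤ n) (hx : IsOuter n k x) : IsOuter n k (pairVal x) := by
  simp only [IsOuter, pairVal] at *
  split_ifs <;> omega

theorem isOuter_outerConjVal (hk : 2 * k ≤ n) (hx : IsOuter n k x) (hx' : x < 2 * n) :
    IsOuter n k (outerConjVal n x) := by
  simp only [IsOuter, outerConjVal] at *
  split_ifs <;> omega

theorem not_isOuter_windowRevVal (hl : l ≤ n) (hx : ¬IsOuter n k x) :
    ¬IsOuter n k (windowRevVal n l x) := by
  simp only [IsOuter, windowRevVal] at *
  split_ifs <;> omega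

theorem not_isOuter_middleConjVal (hkl : 2 * k + l ≤ n) (hx : ¬IsOuter n k x) :
    ¬IsOuter n k (middleConjVal n k l x) := by
  simp only [IsOuter, middleConjVal] at *
  split_ifs <;> omega

theorem rev_pairVal_outerConjVal (hk : 2 * k ≤ n) (hx : IsOuter n k x) (hx' : x < 2 * n) :
    2 * n - 1 - pairVal (outerConjVal n x) = outerConjVal n (pairVal x) := by
  simp only [IsOuter, outerConjVal, pairVal] at *
  split_ifs <;> omega

theorem rev_windowRevVal_middleConjVal (hkl : 2 * k + l ≤ n) (hx : ¬IsOuter n k x) :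
    2 * n - 1 - windowRevVal n l (middleConjVal n k l x) =
      middleConjVal n k l (windowRevVal n (n - 2 * k - l) x) := by
  simp only [IsOuter, middleConjVal, windowRevVal] at *
  split_ifs <;> omega

theorem rev_cVal_conjVal (hkl : 2 * k + l ≤ n) (hx : x < 2 * n) :
    2 * n - 1 - cVal n k l (conjVal n k l x) = conjVal n k l (cVal n k (n - 2 * k - l) x) := by
  by_cases ho : IsOuter n k x
  · rw [conjVal, if_pos ho, cVal, if_pos (isOuter_outerConjVal (by omega) ho hx), cVal,
      if_pos ho, conjVal, if_pos (isOuter_pairVal (by omega) ho)]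
    exact rev_pairVal_outerConjVal (by omega) ho hx
  · rw [conjVal, if_neg ho, cVal, if_neg (not_isOuter_middleConjVal hkl ho), cVal, if_neg ho,
      conjVal, if_neg (not_isOuter_windowRevVal (by omega) ho)]
    exact rev_windowRevVal_middleConjVal hkl ho

theorem conjVal_lt (hkl : 2 * k + l ≤ n) (hx : x < 2 * n) : conjVal n k l x < 2 * n := by
  simp only [conjVal, IsOuter, outerConjVal, middleConjVal]
  split_ifs <;> omega

theorem conjVal_injective (hkl : 2 * k + l ≤ n) {y : ℕ} (hx : x < 2 * n) (hy : y < 2 * n)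
    (h : conjVal n k l x = conjVal n k l y) : x = y := by
  simp only [conjVal, IsOuter, outerConjVal, middleConjVal] at h
  split_ifs at h <;> omega

theorem conjVal_rev (hkl : 2 * k + l ≤ n) (hx : x < 2 * n) :
    conjVal n k l (2 * n - 1 - x) = 2 * n - 1 - conjVal n k l x := by
  simp only [conjVal, IsOuter, outerConjVal, middleConjVal]
  split_ifs <;> omega

noncomputable def conjugator (n k l : ℕ) (hkl : 2 * k + l ≤ n) : Equiv.Perm (Fin (2 * n)) :=
  Equiv.ofBijective (fun x => ⟨conjVal n k l x, conjVal_lt hkl x.isLt⟩) <|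
    Finite.injective_iff_bijective.mp fun x y h =>
      Fin.ext (conjVal_injective hkl x.isLt y.isLt (congrArg Fin.val h))

theorem val_conjugator_apply (hkl : 2 * k + l ≤ n) (x : Fin (2 * n)) :
    (conjugator n k l hkl x).val = conjVal n k l x.val := rfl

theorem conjugator_mul_wA' (hkl : 2 * k + l ≤ n) :
    conjugator n k l hkl * wA' n = wA' n * conjugator n k l hkl := by
  ext x
  simp only [Equiv.Perm.mul_apply, val_conjugator_apply, val_wA'_apply]
  exact conjVal_rev hkl x.isLt

theorem wA'_mul_cA'_eq_conj (hn : 0 < n) (hkl : 2 * k + l ≤ n) :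
    wA' n * cA' n hn k l =
      conjugator n k l hkl * cA' n hn k (n - 2 * k - l) * (conjugator n k l hkl)⁻¹ := by
  rw [eq_mul_inv_iff_mul_eq]
  ext x
  simp only [Equiv.Perm.mul_apply, val_conjugator_apply, val_wA'_apply,
    val_cA'_apply hn hkl, val_cA'_apply hn (show 2 * k + (n - 2 * k - l) ≤ n by omega)]
  exact rev_cVal_conjVal hkl x.isLt

end Conjugator

/-- For all integers `k, l ≥ 0` with `2k + l ≤ n`, the permutation `w₀ ∘ c_{k,l}` is an
involution and is conjugate to `c_{k, n−2k−l}` by an element of the centralizer of `w₀`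
in `S_{2n}`. -/
theorem stmt5 (n : ℕ) (hn : 2 ≤ n) (k l : ℕ) (hkl : 2 * k + l ≤ n) :
    (wA' n * cA' n (by omega) k l) * (wA' n * cA' n (by omega) k l) = 1 ∧
    ∃ g : Equiv.Perm (Fin (2 * n)),
      g * wA' n = wA' n * g ∧
        wA' n * cA' n (by omega) k l = g * cA' n (by omega) k (n - 2 * k - l) * g⁻¹ := by
  have hconj := wA'_mul_cA'_eq_conj (by omega) hkl
  refine ⟨?_, conjugator n k l hkl, conjugator_mul_wA' hkl, hconj⟩
  rw [hconj]
  simp only [mul_assoc, inv_mul_cancel_left, ← mul_assoc (cA' _ _ k _),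
    cA'_mul_self _ (show 2 * k + (n - 2 * k - l) ≤ n by omega), one_mul, mul_inv_cancel]
end

section
/- Suppose m is odd and let w₀ ∈ D_m be the diagonal matrix sending e_i ↦ −e_i for 1 ≤ i ≤ m−1 and e_m ↦ e_m. Then every u ∈ D_m with u² = 1 and u w₀ = w₀ u is conjugate to c_{k,l}, for exactly one pair (k,l) of integers with k,l ≥ 0 and 2k + l ≤ m−1, by an element of the centralizer of w₀ in D_m. -/
/-!
Write a signed permutation matrix as a pair `(σ, s)` of a permutation and a vector of signs.
Then `u² = 1` says that `σ` is an involution whose signs are constant on its 2-cycles, and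
`u w₀ = w₀ u` says that `σ` fixes the last point. Conjugating by `(τ, t)` in the centralizer
of `w₀` preserves the type of every point: moved, the last point, or another fixed point with
its sign. So the number `2k` of moved points and the number `l` of other fixed points with sign
`-1` are invariants, and for `c_{k,l}` they are `2k` and `l`. Conversely, two involutions are
conjugate by any bijection of their fixed points, extended by matching 2-cycles, and the signs
on a 2-cycle can be absorbed into `t`. The sign at the last point is forced: the signs of `u`
have product `1`, and those on 2-cycles pair off, so it is `(-1)^l`, as for `c_{k,l}`. Finally
`(τ, -t)` conjugates in the same way and, `m` being odd, one of `t`, `-t` has product `1`,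
which puts the conjugator in `D_m`.
-/

/-- A real `m × m` matrix is a *signed permutation matrix* if it has exactly one nonzero
entry in each row and in each column, and each such entry is `1` or `−1`. -/
def IsSignedPerm {m : ℕ} (M : Matrix (Fin m) (Fin m) ℝ) : Prop :=
  (∀ i, ∃! j, M i j ≠ 0) ∧ (∀ j, ∃! i, M i j ≠ 0) ∧
    (∀ i j, M i j = 0 ∨ M i j = 1 ∨ M i j = -1)

/-- Membership in the group `D_m` of signed permutation matrices with an even number of
entries equal to `−1` (a subgroup of `GL(m, ℝ)`). -/
def InD {m : ℕ} (M : Matrix (Fin m) (Fin m) ℝ) : Prop :=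
  IsSignedPerm M ∧ Even (Nat.card {p : Fin m × Fin m // M p.1 p.2 = -1})

/-- The involution `c_{k,l} ∈ D_m` (written with 0-indexed rows/columns): it swaps the
standard basis vectors `e_{2j−1} ↔ e_{2j}` for `1 ≤ j ≤ k` (0-indexed: `e_{2j} ↔ e_{2j+1}`
for `0 ≤ j < k`); if `l` is odd, it sends `e_i ↦ −e_i` for the last `l+1` indices
(0-indexed: `m − l − 1 ≤ i < m`); if `l` is even, it sends `e_i ↦ −e_i` for the `l`
indices with `m − l ≤ i ≤ m − 1` (1-indexed), sparing `e_m` (0-indexed: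
`m − l − 1 ≤ i < m − 1`); and it fixes the remaining basis vectors. -/
def cD (m k l : ℕ) : Matrix (Fin m) (Fin m) ℝ :=
  Matrix.of fun i j =>
    if (j : ℕ) < 2 * k then
      (if (i : ℕ) = (if (j : ℕ) % 2 = 0 then (j : ℕ) + 1 else (j : ℕ) - 1) then 1 else 0)
    else if (l % 2 = 1 ∧ m - l - 1 ≤ (j : ℕ)) ∨
        (l % 2 = 0 ∧ m - l - 1 ≤ (j : ℕ) ∧ (j : ℕ) < m - 1) then
      (if i = j then -1 else 0)
    else (if i = j then 1 else 0)

/-- The diagonal matrix `w₀` sending `e_i ↦ −e_i` for `1 ≤ i ≤ m−1` and `e_m ↦ e_m`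
(0-indexed: it negates `e_i` for `i < m − 1` and fixes `e_{m−1}`). -/
def wD (m : ℕ) : Matrix (Fin m) (Fin m) ℝ :=
  Matrix.of fun i j =>
    if i = j then (if (i : ℕ) = m - 1 then 1 else -1) else 0

open Finset Function Equiv

section SignedPerm

variable {ι : Type*} [DecidableEq ι]

def signedPerm (σ : Perm ι) (s : ι → ℤˣ) : Matrix ι ι ℝ :=
  Matrix.of fun i j => if i = σ j then ((s j : ℤ) : ℝ) else 0

@[simp]
lemma signedPerm_apply (σ : Perm ι) (s : ι → ℤˣ) (i j : ι) :
    signedPerm σ s i j = if i = σ j then ((s j : ℤ) : ℝ) else 0 :=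
  rfl

lemma signedPerm_one : signedPerm (1 : Perm ι) 1 = 1 := by
  ext i j
  simp [Matrix.one_apply]

lemma signedPerm_injective {σ τ : Perm ι} {s t : ι → ℤˣ}
    (h : signedPerm σ s = signedPerm τ t) : σ = τ ∧ s = t := by
  have key (j : ι) : σ j = τ j ∧ s j = t j := by
    have hj := congrFun (congrFun h (σ j)) j
    by_cases hστ : σ j = τ j
    · simp only [signedPerm_apply, hστ, if_true, Int.cast_inj, Units.val_inj] at hj
      exact ⟨hστ, hj⟩
    · simp [hστ] at hj
  exact ⟨Perm.ext fun j => (key j).1, funext fun j => (key j).2⟩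

variable [Fintype ι]

lemma signedPerm_mul (σ τ : Perm ι) (s t : ι → ℤˣ) :
    signedPerm σ s * signedPerm τ t = signedPerm (σ * τ) (fun j => s (τ j) * t j) := by
  ext i j
  simp only [Matrix.mul_apply, signedPerm_apply, ite_mul, zero_mul, mul_ite, mul_zero,
    Perm.mul_apply, Units.val_mul, Int.cast_mul]
  rw [Finset.sum_eq_single (τ j) (by intro b _ hb; simp [hb]) (by simp)]
  simp

lemma signedPerm_mul_eq_mul_iff {σ τ ρ : Perm ι} {s t r : ι → ℤˣ} :
    signedPerm σ s * signedPerm τ t = signedPerm τ t * signedPerm ρ r ↔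
      (∀ x, σ (τ x) = τ (ρ x)) ∧ ∀ x, s (τ x) * t x = t (ρ x) * r x := by
  rw [signedPerm_mul, signedPerm_mul]
  refine ⟨fun h => ?_, fun ⟨hστ, hst⟩ => ?_⟩
  · obtain ⟨hperm, hsign⟩ := signedPerm_injective h
    exact ⟨fun x => congrFun (congrArg DFunLike.coe hperm) x, fun x => congrFun hsign x⟩
  · rw [show σ * τ = τ * ρ from Perm.ext hστ]
    exact congrArg _ (funext hst)

lemma signedPerm_mul_self_eq_one_iff {σ : Perm ι} {s : ι → ℤˣ} :
    signedPerm σ s * signedPerm σ s = 1 ↔ Involutive σ ∧ ∀ x, s (σ x) = s x := by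
  rw [signedPerm_mul, ← signedPerm_one]
  refine ⟨fun h => ?_, fun ⟨hσ, hs⟩ => ?_⟩
  · obtain ⟨hperm, hsign⟩ := signedPerm_injective h
    refine ⟨fun x => congrFun (congrArg DFunLike.coe hperm) x, fun x => ?_⟩
    simpa [mul_eq_one_iff_eq_inv, Int.units_inv_eq_self] using congrFun hsign x
  · rw [show σ * σ = 1 from Perm.ext hσ]
    exact congrArg _ (funext fun x => by simp [hs, Int.units_mul_self])

lemma signedPerm_mul_signedPerm_inv (σ : Perm ι) (s : ι → ℤˣ) :
    signedPerm σ s * signedPerm σ⁻¹ (fun j => s (σ⁻¹ j)) = 1 := by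
  rw [signedPerm_mul, mul_inv_cancel, ← signedPerm_one]
  exact congrArg _ (funext fun j => Int.units_mul_self _)

lemma eq_signedPerm_mul_mul_inv_iff (A B : Matrix ι ι ℝ) (τ : Perm ι) (t : ι → ℤˣ) :
    A = signedPerm τ t * B * (signedPerm τ t)⁻¹ ↔
      A * signedPerm τ t = signedPerm τ t * B := by
  have := invertibleOfRightInverse _ _ (signedPerm_mul_signedPerm_inv τ t)
  rw [eq_comm, Matrix.mul_inv_eq_iff_eq_mul_of_invertible, eq_comm]

end SignedPerm

lemma prod_int_units_eq_neg_one_pow {α : Type*} (S : Finset α) (s : α → ℤˣ) :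
    ∏ x ∈ S, s x = (-1) ^ #{x ∈ S | s x = -1} := by
  calc ∏ x ∈ S, s x = ∏ x ∈ S, if s x = -1 then -1 else 1 :=
        prod_congr rfl fun x _ => by rcases Int.units_eq_one_or (s x) with h | h <;> simp [h]
    _ = (-1) ^ #{x ∈ S | s x = -1} := by rw [prod_ite, prod_const, prod_const_one, mul_one]

section Fin

variable {m : ℕ}

lemma isSignedPerm_signedPerm (σ : Perm (Fin m)) (s : Fin m → ℤˣ) :
    IsSignedPerm (signedPerm σ s) := by
  refine ⟨fun i => ⟨σ.symm i, ?_, ?_⟩, fun j => ⟨σ j, ?_, ?_⟩, fun i j => ?_⟩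
  · simp
  · intro j hj
    by_contra hne
    exact hj (if_neg (by rintro rfl; simp at hne))
  · simp
  · intro i hi
    by_contra hne
    exact hi (if_neg hne)
  · simp only [signedPerm_apply]
    split_ifs
    · rcases Int.units_eq_one_or (s j) with h | h <;> simp [h]
    · simp

lemma IsSignedPerm.exists_eq_signedPerm {M : Matrix (Fin m) (Fin m) ℝ} (h : IsSignedPerm M) :
    ∃ σ s, M = signedPerm σ s := by
  obtain ⟨hrow, hcol, hent⟩ := h
  choose f hf using fun j => (hcol j).exists
  have hinj : Injective f := fun a b hab =>
    (hrow (f a)).unique (hf a) (hab ▸ hf b)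
  let σ := Equiv.ofBijective f (Finite.injective_iff_bijective.mp hinj)
  refine ⟨σ, fun j => if M (f j) j = 1 then 1 else -1, ?_⟩
  ext i j
  simp only [signedPerm_apply]
  split_ifs with hi h1
  · rw [hi]; simp [σ, h1]
  · rw [hi]
    rcases hent (f j) j with h | h | h
    · exact absurd h (hf j)
    · exact absurd h h1
    · simp [σ, h]
  · by_contra hne
    exact hi ((hcol j).unique hne (hf j))

lemma inD_signedPerm_iff {σ : Perm (Fin m)} {s : Fin m → ℤˣ} :
    InD (signedPerm σ s) ↔ ∏ j, s j = 1 := by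
  have hentry (i j : Fin m) : signedPerm σ s i j = -1 ↔ i = σ j ∧ s j = -1 := by
    rcases Int.units_eq_one_or (s j) with h | h <;> by_cases hi : i = σ j <;> norm_num [h, hi]
  let e : {p : Fin m × Fin m // signedPerm σ s p.1 p.2 = -1} ≃ {j // s j = -1} :=
    { toFun p := ⟨p.1.2, ((hentry _ _).1 p.2).2⟩
      invFun j := ⟨(σ j, j), (hentry _ _).2 ⟨rfl, j.2⟩⟩
      left_inv := fun ⟨⟨i, j⟩, h⟩ => by simp [((hentry i j).1 h).1]
      right_inv j := rfl }
  rw [InD, and_iff_right (isSignedPerm_signedPerm σ s), Nat.card_congr e,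
    Nat.card_eq_fintype_card, Fintype.card_subtype, prod_int_units_eq_neg_one_pow,
    neg_one_pow_eq_one_iff_even (by decide)]

end Fin

namespace Function.Involutive

variable {α : Type*} [LinearOrder α] {f : α → α}

def equivFixedSumPairs (hf : Involutive f) : α ≃ {x // f x = x} ⊕ {x // x < f x} × Bool where
  toFun x :=
    if h : f x = x then .inl ⟨x, h⟩
    else if h' : x < f x then .inr (⟨x, h'⟩, false)
    else .inr (⟨f x, by rw [hf]; exact lt_of_le_of_ne (not_lt.1 h') h⟩, true)
  invFun := Sum.elim Subtype.val fun p => bif p.2 then f p.1 else p.1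
  left_inv x := by
    dsimp only
    split_ifs <;> simp [hf x]
  right_inv z := by
    rcases z with ⟨x, hx⟩ | ⟨⟨x, hx⟩, _ | _⟩
    · simp [hx]
    · simp [hx.ne', hx]
    · simp [hf x, hx.ne, not_lt.2 hx.le]

lemma apply_equivFixedSumPairs_symm (hf : Involutive f) (z) :
    f (hf.equivFixedSumPairs.symm z) =
      hf.equivFixedSumPairs.symm (Sum.map id (Prod.map id not) z) := by
  rcases z with ⟨x, hx⟩ | ⟨x, _ | _⟩
  · exact hx
  · rfl
  · exact hf x

variable [Fintype α]

lemma card_eq_card_fixed_add_two_mul (hf : Involutive f) :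
    Fintype.card α = Fintype.card {x // f x = x} + 2 * Fintype.card {x // x < f x} := by
  rw [Fintype.card_congr hf.equivFixedSumPairs, Fintype.card_sum, Fintype.card_prod,
    Fintype.card_bool, mul_comm]

lemma prod_eq_prod_fixed_mul {M : Type*} [CommMonoid M] (hf : Involutive f) (g : α → M) :
    ∏ x, g x = (∏ x : {x // f x = x}, g x) * ∏ x : {x // x < f x}, g (f x) * g x := by
  rw [← hf.equivFixedSumPairs.symm.prod_comp, Fintype.prod_sum_type, Fintype.prod_prod_type]
  simp only [Fintype.prod_bool]
  rfl

lemma exists_perm_semiconj {g : α → α} (hf : Involutive f) (hg : Involutive g)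
    (e : {x // g x = x} ≃ {x // f x = x}) :
    ∃ τ : Perm α, (∀ x, f (τ x) = τ (g x)) ∧ ∀ x : {x // g x = x}, τ x = e x := by
  have hcard : Fintype.card {x // x < g x} = Fintype.card {x // x < f x} := by
    have hf_card := hf.card_eq_card_fixed_add_two_mul
    have hg_card := hg.card_eq_card_fixed_add_two_mul
    have hfixed_card := Fintype.card_congr e
    omega
  let F := Equiv.sumCongr e (Equiv.prodCongr (Fintype.equivOfCardEq hcard) (Equiv.refl Bool))
  refine ⟨hg.equivFixedSumPairs.trans (F.trans hf.equivFixedSumPairs.symm), fun x => ?_,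
    fun x => ?_⟩
  · obtain ⟨z, rfl⟩ := hg.equivFixedSumPairs.symm.surjective x
    simp only [Equiv.trans_apply, Equiv.apply_symm_apply, apply_equivFixedSumPairs_symm]
    congr 1
    rcases z with _ | ⟨_, _⟩ <;> rfl
  · simp [equivFixedSumPairs, x.2, F]

end Function.Involutive

section FixedType

variable {α : Type*} [DecidableEq α] {a : α} {f g : α → α} {s r : α → ℤˣ}

/-- `none`: moved by `f`; `some none`: the base point `a`, if fixed; `some (some ε)`: any other
fixed point `x`, with `ε = s x`. -/
def fixedType (a : α) (f : α → α) (s : α → ℤˣ) (x : α) : Option (Option ℤˣ) :=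
  if f x = x then some (if x = a then none else some (s x)) else none

lemma fixedType_eq_none {x : α} : fixedType a f s x = none ↔ f x ≠ x := by
  unfold fixedType; split_ifs <;> simp_all

lemma fixedType_eq_some_none {x : α} : fixedType a f s x = some none ↔ f x = x ∧ x = a := by
  unfold fixedType; split_ifs <;> simp_all

lemma fixedType_eq_some_some {x : α} {ε : ℤˣ} :
    fixedType a f s x = some (some ε) ↔ f x = x ∧ x ≠ a ∧ s x = ε := by
  unfold fixedType; split_ifs <;> simp_all

lemma fixedType_apply_of_semiconj {τ : Perm α} {t : α → ℤˣ} (hτa : τ a = a)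
    (hτ : ∀ x, f (τ x) = τ (g x)) (hst : ∀ x, s (τ x) * t x = t (g x) * r x) (x : α) :
    fixedType a f s (τ x) = fixedType a g r x := by
  have hsign : g x = x → s (τ x) = r x := fun hx => by
    have h := hst x
    rw [hx, mul_comm] at h
    exact mul_left_cancel h
  simp only [fixedType, hτ, τ.injective.eq_iff, τ.injective.eq_iff' hτa]
  split_ifs <;> simp_all

variable [Fintype α]

lemma card_fixedType_eq_of_semiconj {τ : Perm α} {t : α → ℤˣ} (hτa : τ a = a)
    (hτ : ∀ x, f (τ x) = τ (g x)) (hst : ∀ x, s (τ x) * t x = t (g x) * r x)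
    (v : Option (Option ℤˣ)) :
    Fintype.card {x // fixedType a f s x = v} = Fintype.card {x // fixedType a g r x = v} :=
  Fintype.card_congr (τ.subtypeEquiv fun x => by
    rw [fixedType_apply_of_semiconj hτa hτ hst]).symm

lemma card_eq_sum_card_fixedType :
    Fintype.card α = Fintype.card {x // fixedType a f s x = none} +
      Fintype.card {x // fixedType a f s x = some none} +
      Fintype.card {x // fixedType a f s x = some (some 1)} +
      Fintype.card {x // fixedType a f s x = some (some (-1))} := by
  rw [← Fintype.card_congr (Equiv.sigmaFiberEquiv (fixedType a f s)), Fintype.card_sigma,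
    Fintype.sum_option, Fintype.sum_option, UnitsInt.univ, sum_pair (by decide)]
  ring

lemma card_fixedType_eq_some_none (ha : f a = a) :
    Fintype.card {x // fixedType a f s x = some none} = 1 := by
  rw [Fintype.card_eq_one_iff]
  refine ⟨⟨a, fixedType_eq_some_none.2 ⟨ha, rfl⟩⟩, fun ⟨x, hx⟩ => ?_⟩
  exact Subtype.ext (fixedType_eq_some_none.1 hx).2

end FixedType

section Involution

variable {α : Type*} [LinearOrder α] {a : α} {f g : α → α} {s r : α → ℤˣ}

lemma exists_sign_semiconj {τ : α → α} (hg : Involutive g) (hτ : ∀ x, f (τ x) = τ (g x))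
    (hs : ∀ x, s (f x) = s x) (hfix : ∀ x, g x = x → s (τ x) = r x)
    (hmoved : ∀ x, g x ≠ x → r x = 1) :
    ∃ t : α → ℤˣ, ∀ x, s (τ x) * t x = t (g x) * r x := by
  refine ⟨fun x => if g x < x then s (τ x) else 1, fun x => ?_⟩
  rcases lt_trichotomy (g x) x with hlt | heq | hgt
  · simp [hlt, hg x, not_lt.2 hlt.le, hmoved x hlt.ne, Int.units_mul_self]
  · simp [heq, hfix x heq, mul_comm]
  · simp [hg x, hgt, not_lt.2 hgt.le, hmoved x hgt.ne', ← hτ, hs]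

variable [Fintype α]

lemma card_fixedType_eq_none (hf : Involutive f) :
    Fintype.card {x // fixedType a f s x = none} = 2 * Fintype.card {x // x < f x} := by
  have hcard := hf.card_eq_card_fixed_add_two_mul
  simp only [fixedType_eq_none]
  rw [Fintype.card_subtype_compl]
  omega

lemma apply_eq_neg_one_pow_card_fixedType (hf : Involutive f) (hs : ∀ x, s (f x) = s x)
    (ha : f a = a) (hprod : ∏ x, s x = 1) :
    s a = (-1) ^ Fintype.card {x // fixedType a f s x = some (some (-1))} := by
  have hpairs : ∏ x : {x // x < f x}, s (f x) * s x = 1 :=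
    Fintype.prod_eq_one _ fun x => by rw [hs, Int.units_mul_self]
  have hfixed : ∏ x : {x // f x = x}, s x = s a * ∏ x ∈ {x | f x = x ∧ x ≠ a}, s x := by
    rw [← Finset.prod_subtype {x | f x = x} (by simp), ← mul_prod_erase _ _ (by simpa using ha)]
    congr 2
    ext x
    simp [and_comm]
  have hcard : #{x ∈ {x | f x = x ∧ x ≠ a} | s x = -1} =
      Fintype.card {x // fixedType a f s x = some (some (-1))} := by
    simp only [fixedType_eq_some_some, Fintype.card_subtype, filter_filter, and_assoc]
  rw [hf.prod_eq_prod_fixed_mul, hpairs, mul_one, hfixed, prod_int_units_eq_neg_one_pow,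
    hcard] at hprod
  rw [eq_inv_of_mul_eq_one_left hprod, Int.units_inv_eq_self]

theorem exists_signedPerm_semiconj (a : α) {σ ρ : Perm α} (hσ : Involutive σ)
    (hρ : Involutive ρ) (hs : ∀ x, s (σ x) = s x) (hr : ∀ x, ρ x ≠ x → r x = 1)
    (hρa : ρ a = a) (ha : s a = r a)
    (hfib : ∀ v, Fintype.card {x // fixedType a σ s x = v} =
      Fintype.card {x // fixedType a ρ r x = v})
    (hodd : Odd (Fintype.card α)) :
    ∃ τ t, τ a = a ∧ ∏ x, t x = 1 ∧
      signedPerm σ s * signedPerm τ t = signedPerm τ t * signedPerm ρ r := by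
  obtain ⟨e, he⟩ : ∃ e : α ≃ α, ∀ x, fixedType a σ s (e x) = fixedType a ρ r x :=
    ⟨Equiv.ofFiberEquiv fun v => (Fintype.equivOfCardEq (hfib v)).symm,
      Equiv.ofFiberEquiv_map _⟩
  have hfixed (x : α) : ρ x = x ↔ σ (e x) = e x := by
    simpa only [fixedType_eq_none, not_iff_not] using (congrArg (· = none) (he x)).to_iff.symm
  obtain ⟨τ, hτ, hτe⟩ := hσ.exists_perm_semiconj hρ (e.subtypeEquiv hfixed)
  have hτfix (x : α) (hx : ρ x = x) : fixedType a σ s (τ x) = fixedType a ρ r x := by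
    rw [hτe ⟨x, hx⟩]
    exact he x
  have hτa : τ a = a := (fixedType_eq_some_none.1
    ((hτfix a hρa).trans (fixedType_eq_some_none.2 ⟨hρa, rfl⟩))).2
  have hsign (x : α) (hx : ρ x = x) : s (τ x) = r x := by
    by_cases hxa : x = a
    · rw [hxa, hτa, ha]
    · exact (fixedType_eq_some_some.1
        ((hτfix x hx).trans (fixedType_eq_some_some.2 ⟨hx, hxa, rfl⟩))).2.2
  obtain ⟨t, ht⟩ := exists_sign_semiconj hρ hτ hs hsign hr
  -- `-t` solves the same equations, and since `card α` is odd one of `t`, `-t` has product `1`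
  rcases Int.units_eq_one_or (∏ x, t x) with hprod | hprod
  · exact ⟨τ, t, hτa, hprod, signedPerm_mul_eq_mul_iff.2 ⟨hτ, ht⟩⟩
  · refine ⟨τ, -t, hτa, ?_, signedPerm_mul_eq_mul_iff.2 ⟨hτ, fun x => ?_⟩⟩
    · simp [Finset.prod_neg, hprod, hodd.neg_one_pow]
    · simp [ht x]

end Involution

section Dm

variable {n k l : ℕ}

def wSign (n : ℕ) (i : Fin (n + 1)) : ℤˣ := if i = Fin.last n then 1 else -1

lemma wD_eq_signedPerm : wD (n + 1) = signedPerm 1 (wSign n) := by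
  ext i j
  by_cases hij : i = j
  · subst hij
    by_cases hi : (i : ℕ) = n <;> simp [wD, wSign, hi, Fin.ext_iff]
  · simp [wD, hij]

lemma signedPerm_mul_wD_eq_iff {σ : Perm (Fin (n + 1))} {s : Fin (n + 1) → ℤˣ} :
    signedPerm σ s * wD (n + 1) = wD (n + 1) * signedPerm σ s ↔
      σ (Fin.last n) = Fin.last n := by
  rw [wD_eq_signedPerm, signedPerm_mul, signedPerm_mul, mul_one, one_mul]
  refine ⟨fun h => ?_, fun h => congrArg _ (funext fun j => ?_)⟩
  · have hlast := congrFun (signedPerm_injective h).2 (Fin.last n)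
    by_contra hne
    rcases Int.units_eq_one_or (s (Fin.last n)) with hs | hs <;>
      simp [wSign, hne, hs] at hlast
  · simp [wSign, σ.injective.eq_iff' h, mul_comm]

-- The guard `j < n` only keeps the value in range when `2 * k > n`, a case never used.
def pairSwap (n k : ℕ) (j : Fin (n + 1)) : Fin (n + 1) :=
  if h : (j : ℕ) < 2 * k ∧ (j : ℕ) % 2 = 0 ∧ (j : ℕ) < n then
    ⟨j + 1, Nat.succ_lt_succ h.2.2⟩
  else if (j : ℕ) < 2 * k ∧ (j : ℕ) % 2 = 1 then ⟨j - 1, (Nat.sub_le _ _).trans_lt j.isLt⟩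
  else j

lemma val_pairSwap_eq_ite (j : Fin (n + 1)) :
    (pairSwap n k j : ℕ) =
      if (j : ℕ) < 2 * k ∧ (j : ℕ) % 2 = 0 ∧ (j : ℕ) < n then (j : ℕ) + 1
      else if (j : ℕ) < 2 * k ∧ (j : ℕ) % 2 = 1 then (j : ℕ) - 1 else j := by
  unfold pairSwap
  split_ifs <;> rfl

lemma pairSwap_involutive (n k : ℕ) : Involutive (pairSwap n k) := by
  intro j
  apply Fin.ext
  simp only [val_pairSwap_eq_ite]
  split_ifs <;> omega

lemma val_pairSwap (h : 2 * k ≤ n) (j : Fin (n + 1)) :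
    (pairSwap n k j : ℕ) =
      if (j : ℕ) < 2 * k then (if (j : ℕ) % 2 = 0 then (j : ℕ) + 1 else (j : ℕ) - 1)
      else j := by
  rw [val_pairSwap_eq_ite]
  split_ifs <;> omega

def cPerm (n k : ℕ) : Perm (Fin (n + 1)) := Involutive.toPerm _ (pairSwap_involutive n k)

def cSign (n l : ℕ) (j : Fin (n + 1)) : ℤˣ :=
  if n - l ≤ (j : ℕ) ∧ ((j : ℕ) < n ∨ l % 2 = 1) then -1 else 1

lemma cD_eq_signedPerm (h : 2 * k + l ≤ n) :
    cD (n + 1) k l = signedPerm (cPerm n k) (cSign n l) := by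
  ext i j
  simp only [cD, cPerm, cSign, Matrix.of_apply, signedPerm_apply, Involutive.coe_toPerm,
    Fin.ext_iff, val_pairSwap (show 2 * k ≤ n by omega)]
  split_ifs <;> first | omega | norm_num

lemma cPerm_apply_eq_self_iff (h : 2 * k ≤ n) {j : Fin (n + 1)} :
    cPerm n k j = j ↔ 2 * k ≤ (j : ℕ) := by
  simp only [cPerm, Involutive.coe_toPerm, Fin.ext_iff, val_pairSwap h]
  split_ifs <;> omega

lemma cSign_last : cSign n l (Fin.last n) = (-1) ^ l := by
  rcases Nat.even_or_odd l with hl | hl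
  · simp [cSign, hl.neg_one_pow, Nat.even_iff.1 hl]
  · simp [cSign, hl.neg_one_pow, Nat.odd_iff.1 hl]

lemma card_fin_subtype_le_and_lt {N a b : ℕ} (hb : b ≤ N) :
    Fintype.card {x : Fin N // a ≤ (x : ℕ) ∧ (x : ℕ) < b} = b - a := by
  rw [Fintype.card_subtype, ← card_map Fin.valEmbedding, ← Nat.card_Ico]
  congr 1
  ext y
  simp only [mem_map, mem_filter, mem_univ, true_and, Fin.valEmbedding_apply, mem_Ico]
  exact ⟨fun ⟨x, hx, hxy⟩ => hxy ▸ hx, fun hy => ⟨⟨y, by omega⟩, hy, rfl⟩⟩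

lemma card_fixedType_cD_none (h : 2 * k + l ≤ n) :
    Fintype.card {x // fixedType (Fin.last n) (cPerm n k) (cSign n l) x = none} = 2 * k := by
  simp only [fixedType_eq_none, ne_eq, cPerm_apply_eq_self_iff (show 2 * k ≤ n by omega), not_le]
  rw [Fintype.card_subtype, Fin.card_filter_val_lt, min_eq_right (by omega)]

lemma card_fixedType_cD_neg (h : 2 * k + l ≤ n) :
    Fintype.card {x // fixedType (Fin.last n) (cPerm n k) (cSign n l) x = some (some (-1))} =
      l := by
  refine (Fintype.card_congr (Equiv.subtypeEquivRight fun x => ?_)).trans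
    ((card_fin_subtype_le_and_lt (a := n - l) (Nat.le_succ n)).trans (by omega))
  simp only [fixedType_eq_some_some, cPerm_apply_eq_self_iff (show 2 * k ≤ n by omega), cSign,
    ne_eq, Fin.ext_iff, Fin.val_last]
  split_ifs <;> simp <;> omega

lemma card_fixedType_of_eq_conj_cD {σ : Perm (Fin (n + 1))} {s : Fin (n + 1) → ℤˣ}
    {g : Matrix (Fin (n + 1)) (Fin (n + 1)) ℝ} (hkl : 2 * k + l ≤ n) (hg : IsSignedPerm g)
    (hgw : g * wD (n + 1) = wD (n + 1) * g) (hu : signedPerm σ s = g * cD (n + 1) k l * g⁻¹) :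
    Fintype.card {x // fixedType (Fin.last n) σ s x = none} = 2 * k ∧
      Fintype.card {x // fixedType (Fin.last n) σ s x = some (some (-1))} = l := by
  obtain ⟨τ, t, rfl⟩ := hg.exists_eq_signedPerm
  rw [cD_eq_signedPerm hkl, eq_signedPerm_mul_mul_inv_iff, signedPerm_mul_eq_mul_iff] at hu
  have hτ := signedPerm_mul_wD_eq_iff.1 hgw
  rw [card_fixedType_eq_of_semiconj hτ hu.1 hu.2, card_fixedType_eq_of_semiconj hτ hu.1 hu.2]
  exact ⟨card_fixedType_cD_none hkl, card_fixedType_cD_neg hkl⟩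

theorem exists_eq_conj_cD {σ : Perm (Fin (n + 1))} {s : Fin (n + 1) → ℤˣ}
    (hσ : Involutive σ) (hs : ∀ x, s (σ x) = s x) (hprod : ∏ x, s x = 1)
    (hlast : σ (Fin.last n) = Fin.last n) (hodd : Odd (n + 1)) :
    ∃ k l, 2 * k + l ≤ n ∧ ∃ g, InD g ∧ g * wD (n + 1) = wD (n + 1) * g ∧
      signedPerm σ s = g * cD (n + 1) k l * g⁻¹ := by
  set k := Fintype.card {x // x < σ x}
  set l := Fintype.card {x // fixedType (Fin.last n) σ s x = some (some (-1))}
  have hnone := card_fixedType_eq_none (a := Fin.last n) (s := s) hσ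
  have hlast' := card_fixedType_eq_some_none (s := s) hlast
  have htotal := card_eq_sum_card_fixedType (a := Fin.last n) (f := σ) (s := s)
  rw [Fintype.card_fin] at htotal
  have hkl : 2 * k + l ≤ n := by omega
  have hc2k : 2 * k ≤ n := by omega
  have hcfix : cPerm n k (Fin.last n) = Fin.last n := (cPerm_apply_eq_self_iff hc2k).2 (by simpa)
  have hfib (v : Option (Option ℤˣ)) : Fintype.card {x // fixedType (Fin.last n) σ s x = v} =
      Fintype.card {x // fixedType (Fin.last n) (cPerm n k) (cSign n l) x = v} := by
    have hctotal := card_eq_sum_card_fixedType (a := Fin.last n) (f := cPerm n k) (s := cSign n l)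
    have hcnone := card_fixedType_cD_none hkl
    have hclast := card_fixedType_eq_some_none (s := cSign n l) hcfix
    have hcneg := card_fixedType_cD_neg hkl
    rw [Fintype.card_fin] at hctotal
    rcases v with _ | _ | u
    · omega
    · omega
    · rcases Int.units_eq_one_or u with rfl | rfl <;> omega
  have hmoved (x : Fin (n + 1)) (hx : cPerm n k x ≠ x) : cSign n l x = 1 := by
    rw [ne_eq, cPerm_apply_eq_self_iff hc2k] at hx
    simp only [cSign]
    rw [if_neg (by omega)]
  have hsign : s (Fin.last n) = cSign n l (Fin.last n) := by
    rw [apply_eq_neg_one_pow_card_fixedType hσ hs hlast hprod, cSign_last]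
  obtain ⟨τ, t, hτ, ht, hconj⟩ := exists_signedPerm_semiconj (Fin.last n) hσ
    (Involutive.toPerm_involutive _) hs hmoved hcfix hsign hfib (by simpa using hodd)
  refine ⟨k, l, hkl, signedPerm τ t, inD_signedPerm_iff.2 ht, signedPerm_mul_wD_eq_iff.2 hτ,
    ?_⟩
  rw [cD_eq_signedPerm hkl, eq_signedPerm_mul_mul_inv_iff]
  exact hconj

end Dm

/-- Suppose `m` is odd and let `w₀ ∈ D_m` be the diagonal matrix sending `e_i ↦ −e_i` for
`1 ≤ i ≤ m−1` and `e_m ↦ e_m`.  Then every `u ∈ D_m` with `u² = 1` and `u w₀ = w₀ u` is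
conjugate to `c_{k,l}`, for exactly one pair `(k,l)` of integers with `k, l ≥ 0` and
`2k + l ≤ m−1`, by an element of the centralizer of `w₀` in `D_m`. -/
theorem stmt8 (m : ℕ) (hm : 3 ≤ m) (hodd : Odd m)
    (u : Matrix (Fin m) (Fin m) ℝ) (hu : InD u)
    (hu2 : u * u = 1) (hucomm : u * wD m = wD m * u) :
    ∃! p : ℕ × ℕ, 2 * p.1 + p.2 ≤ m - 1 ∧
      ∃ g : Matrix (Fin m) (Fin m) ℝ, InD g ∧ g * wD m = wD m * g ∧
        u = g * cD m p.1 p.2 * g⁻¹ := by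
  obtain ⟨n, rfl⟩ : ∃ n, m = n + 1 := ⟨m - 1, by omega⟩
  obtain ⟨σ, s, rfl⟩ := hu.1.exists_eq_signedPerm
  obtain ⟨hσ, hs⟩ := signedPerm_mul_self_eq_one_iff.1 hu2
  obtain ⟨k, l, hkl, hconj⟩ := exists_eq_conj_cD hσ hs (inD_signedPerm_iff.1 hu)
    (signedPerm_mul_wD_eq_iff.1 hucomm) hodd
  refine ⟨(k, l), ⟨hkl, hconj⟩, ?_⟩
  rintro ⟨k', l'⟩ ⟨hkl', g', hg', hg'w, hu'⟩
  obtain ⟨g, hg, hgw, hu⟩ := hconj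
  obtain ⟨hk, hl⟩ := card_fixedType_of_eq_conj_cD hkl hg.1 hgw hu
  obtain ⟨hk', hl'⟩ :=
    card_fixedType_of_eq_conj_cD (Nat.add_sub_cancel n 1 ▸ hkl') hg'.1 hg'w hu'
  simp only [Prod.mk.injEq]
  omega
end

section
/- Suppose m is odd and let w₀ ∈ D_m be the diagonal matrix sending e_i ↦ −e_i for 1 ≤ i ≤ m−1 and e_m ↦ e_m. Then for all integers k,l ≥ 0 with 2k + l ≤ m−1, the matrix w₀ · c_{k,l} is an involution and is conjugate to c_{k, (m−1)−2k−l} by an element of the centralizer of w₀ in D_m. -/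
namespace Stmt9Aux

/-- permutation part of `cD m k l` (independent of `l`), at the level of naturals -/
def sigNat (k j : ℕ) : ℕ :=
  if j < 2*k then (if j % 2 = 0 then j + 1 else j - 1) else j

/-- the block-reversal permutation used for conjugation -/
def tauNat (m k j : ℕ) : ℕ :=
  if 2*k ≤ j ∧ j < m - 1 then 2*k + m - 2 - j else j

/-- sign part of `cD m k l` -/
noncomputable def cS (m k l j : ℕ) : ℝ :=
  if j < 2*k then 1
  else if (l % 2 = 1 ∧ m - l - 1 ≤ j) ∨ (l % 2 = 0 ∧ m - l - 1 ≤ j ∧ j < m - 1) then -1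
  else 1

/-- sign part of `wD m` -/
noncomputable def wS (m i : ℕ) : ℝ := if i = m - 1 then 1 else -1

/-- sign of the conjugating element -/
noncomputable def epsN (m k i : ℕ) : ℝ :=
  if (i < 2*k ∧ i % 2 = 1) ∨ (i = m - 1 ∧ k % 2 = 1) then -1 else 1

/-- lift a natural map to `Fin m` (identity where out of range) -/
def fn (m : ℕ) (f : ℕ → ℕ) (j : Fin m) : Fin m :=
  if h : f j.val < m then ⟨f j.val, h⟩ else j

/-- monomial matrix with column permutation `p` and column signs `s` -/
noncomputable def mono {m : ℕ} (p : Fin m → Fin m) (s : Fin m → ℝ) :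
    Matrix (Fin m) (Fin m) ℝ :=
  Matrix.of fun i j => if i = p j then s j else 0

lemma mono_mul {m : ℕ} (p q : Fin m → Fin m) (s t : Fin m → ℝ) :
    mono p s * mono q t = mono (fun j => p (q j)) (fun j => s (q j) * t j) := by
  ext i j
  simp only [Matrix.mul_apply, mono, Matrix.of_apply]
  rw [Finset.sum_eq_single (q j)]
  · simp
  · intro b _ hb; simp [hb]
  · simp

lemma mono_ext {m : ℕ} {p p' : Fin m → Fin m} {s s' : Fin m → ℝ}
    (hp : ∀ j, p j = p' j) (hs : ∀ j, s j = s' j) : mono p s = mono p' s' := by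
  rw [funext hp, funext hs]

lemma mono_one {m : ℕ} : mono (fun j : Fin m => j) (fun _ => 1) = 1 := by
  ext i j
  simp [mono, Matrix.one_apply]

lemma cD_eq (m k l : ℕ) (hkl : 2*k ≤ m - 1) (hm : 3 ≤ m) :
    cD m k l = mono (fn m (sigNat k)) (fun j => cS m k l j.val) := by
  ext i j
  have hj := j.isLt
  by_cases h1 : (j : ℕ) < 2*k
  · by_cases h2 : (j:ℕ) % 2 = 0
    · have hb : (j:ℕ) + 1 < m := by omega
      simp [cD, mono, fn, sigNat, cS, h1, h2, hb, Fin.ext_iff]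
    · have hb : (j:ℕ) - 1 < m := by omega
      simp [cD, mono, fn, sigNat, cS, h1, h2, hb, Fin.ext_iff]
  · simp only [cD, mono, fn, sigNat, cS, Matrix.of_apply, h1, if_false, hj, dif_pos,
      Fin.ext_iff]
    split_ifs <;> simp_all <;> omega

lemma wD_eq (m : ℕ) : wD m = mono (fun j : Fin m => j) (fun j => wS m j.val) := by
  ext i j
  by_cases h : i = j
  · subst h; simp [wD, mono, wS]
  · simp [wD, mono, wS, h]


lemma sign_conj (m k l : ℕ) (hm : 3 ≤ m) (hm1 : m % 2 = 1) (hkl : 2*k + l ≤ m - 1)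
    (n : ℕ) (hn : n < m) :
    wS m (sigNat k (tauNat m k n)) * cS m k l (tauNat m k n) * epsN m k (tauNat m k n)
      = epsN m k (tauNat m k (sigNat k n)) * cS m k (m - 1 - 2*k - l) n := by
  obtain ⟨l2, hl2⟩ : ∃ l2, l2 = m - 1 - 2*k - l := ⟨_, rfl⟩
  have hsum : 2*k + l + l2 = m - 1 := by omega
  rw [← hl2]
  clear hl2
  rcases lt_or_ge n (2*k) with hA | hA
  · -- n < 2k
    have e1 : tauNat m k n = n := by unfold tauNat; rw [if_neg (by omega)]
    rcases Nat.even_or_odd n with he | ho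
    · have hp : n % 2 = 0 := Nat.even_iff.mp he
      have e2 : sigNat k n = n + 1 := by unfold sigNat; rw [if_pos (by omega), if_pos hp]
      have e3 : tauNat m k (n+1) = n+1 := by unfold tauNat; rw [if_neg (by omega)]
      rw [e1, e2, e3]
      rw [show wS m (n+1) = -1 from by unfold wS; rw [if_neg (by omega)]]
      rw [show cS m k l n = 1 from by unfold cS; rw [if_pos (by omega)]]
      rw [show cS m k l2 n = 1 from by unfold cS; rw [if_pos (by omega)]]
      rw [show epsN m k n = 1 from by unfold epsN; rw [if_neg (by omega)]]
      rw [show epsN m k (n+1) = -1 from by unfold epsN; rw [if_pos (by omega)]]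
      norm_num
    · have hp : n % 2 = 1 := Nat.odd_iff.mp ho
      have e2 : sigNat k n = n - 1 := by
        unfold sigNat; rw [if_pos (by omega), if_neg (by omega)]
      have e3 : tauNat m k (n-1) = n-1 := by unfold tauNat; rw [if_neg (by omega)]
      rw [e1, e2, e3]
      rw [show wS m (n-1) = -1 from by unfold wS; rw [if_neg (by omega)]]
      rw [show cS m k l n = 1 from by unfold cS; rw [if_pos (by omega)]]
      rw [show cS m k l2 n = 1 from by unfold cS; rw [if_pos (by omega)]]
      rw [show epsN m k n = -1 from by unfold epsN; rw [if_pos (by omega)]]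
      rw [show epsN m k (n-1) = 1 from by unfold epsN; rw [if_neg (by omega)]]
      norm_num
  · rcases eq_or_lt_of_le (show n ≤ m - 1 by omega) with hB | hB
    · -- n = m - 1
      have e1 : tauNat m k n = n := by unfold tauNat; rw [if_neg (by omega)]
      have e2 : sigNat k n = n := by unfold sigNat; rw [if_neg (by omega)]
      rw [e1, e2, e1]
      rw [show wS m n = 1 from by unfold wS; rw [if_pos (by omega)]]
      have hc : cS m k l n = cS m k l2 n := by
        unfold cS
        split_ifs <;> first | rfl | (exfalso; omega)
      rw [hc]
      ring
    · -- 2k ≤ n < m - 1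
      obtain ⟨t, ht⟩ : ∃ t, t = 2*k + m - 2 - n := ⟨_, rfl⟩
      have hts : n + t + 2 = 2*k + m := by omega
      have e1 : tauNat m k n = t := by unfold tauNat; rw [if_pos (by omega)]; omega
      have e2 : sigNat k t = t := by unfold sigNat; rw [if_neg (by omega)]
      have e2' : sigNat k n = n := by unfold sigNat; rw [if_neg (by omega)]
      rw [e1, e2, e2', e1]
      clear ht
      rw [show wS m t = -1 from by unfold wS; rw [if_neg (by omega)]]
      rw [show epsN m k t = 1 from by unfold epsN; rw [if_neg (by omega)]]
      rcases lt_or_ge n (2*k + l) with hc | hc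
      · rw [show cS m k l t = -1 from by unfold cS; rw [if_neg (by omega), if_pos (by omega)]]
        rw [show cS m k l2 n = 1 from by unfold cS; rw [if_neg (by omega), if_neg (by omega)]]
        norm_num
      · rw [show cS m k l t = 1 from by unfold cS; rw [if_neg (by omega), if_neg (by omega)]]
        rw [show cS m k l2 n = -1 from by
          unfold cS; rw [if_neg (by omega), if_pos (by omega)]]
        norm_num

lemma sign_inv (m k l : ℕ) (hm : 3 ≤ m) (hm1 : m % 2 = 1) (hkl : 2*k + l ≤ m - 1)
    (n : ℕ) (hn : n < m) :
    wS m (sigNat k (sigNat k n)) * cS m k l (sigNat k n)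
      * (wS m (sigNat k n) * cS m k l n) = 1 := by
  rcases lt_or_ge n (2*k) with hA | hA
  · rcases Nat.even_or_odd n with he | ho
    · have hp : n % 2 = 0 := Nat.even_iff.mp he
      have e2 : sigNat k n = n + 1 := by unfold sigNat; rw [if_pos (by omega), if_pos hp]
      have e3 : sigNat k (n+1) = n := by
        unfold sigNat; rw [if_pos (by omega), if_neg (by omega)]; omega
      rw [e2, e3]
      simp only [wS, cS]
      split_ifs <;> first | (exfalso; omega) | norm_num
    · have hp : n % 2 = 1 := Nat.odd_iff.mp ho
      have e2 : sigNat k n = n - 1 := by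
        unfold sigNat; rw [if_pos (by omega), if_neg (by omega)]
      have e3 : sigNat k (n-1) = n := by
        unfold sigNat; rw [if_pos (by omega), if_pos (by omega)]; omega
      rw [e2, e3]
      simp only [wS, cS]
      split_ifs <;> first | (exfalso; omega) | norm_num
  · have e2 : sigNat k n = n := by unfold sigNat; rw [if_neg (by omega)]
    rw [e2, e2]
    simp only [wS, cS]
    split_ifs <;> first | (exfalso; omega) | norm_num

lemma sign_gg (m k : ℕ) (hm : 3 ≤ m) (hkl : 2*k ≤ m - 1) (n : ℕ) (hn : n < m) :
    epsN m k (tauNat m k (tauNat m k n)) * epsN m k (tauNat m k n) = 1 := by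
  rcases lt_or_ge n (2*k) with hA | hA
  · have e1 : tauNat m k n = n := by unfold tauNat; rw [if_neg (by omega)]
    rw [e1, e1]
    simp only [epsN]
    split_ifs <;> norm_num
  · rcases eq_or_lt_of_le (show n ≤ m - 1 by omega) with hB | hB
    · have e1 : tauNat m k n = n := by unfold tauNat; rw [if_neg (by omega)]
      rw [e1, e1]
      simp only [epsN]
      split_ifs <;> norm_num
    · have e1 : tauNat m k n = 2*k + m - 2 - n := by unfold tauNat; rw [if_pos (by omega)]
      have e2 : tauNat m k (2*k + m - 2 - n) = n := by
        unfold tauNat; rw [if_pos (by omega)]; omega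
      rw [e1, e2]
      simp only [epsN]
      split_ifs <;> first | (exfalso; omega) | norm_num

lemma sign_gw (m k : ℕ) (hm : 3 ≤ m) (hkl : 2*k ≤ m - 1) (n : ℕ) (hn : n < m) :
    epsN m k (tauNat m k n) * wS m n = wS m (tauNat m k n) * epsN m k (tauNat m k n) := by
  have e0 : wS m (tauNat m k n) = wS m n := by
    unfold wS tauNat
    split_ifs <;> first | rfl | (exfalso; omega)
  rw [e0, mul_comm]

lemma epsN_tau_iff (m k : ℕ) (hm : 3 ≤ m) (hkl : 2*k ≤ m - 1) (n : ℕ) (hn : n < m) :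
    epsN m k (tauNat m k n) = -1
      ↔ ((n < 2*k ∧ n % 2 = 1) ∨ (n = m - 1 ∧ k % 2 = 1)) := by
  have h1 : ((tauNat m k n < 2*k ∧ tauNat m k n % 2 = 1)
        ∨ (tauNat m k n = m - 1 ∧ k % 2 = 1))
      ↔ ((n < 2*k ∧ n % 2 = 1) ∨ (n = m - 1 ∧ k % 2 = 1)) := by
    unfold tauNat; split_ifs <;> omega
  rw [show epsN m k (tauNat m k n)
      = if ((n < 2*k ∧ n % 2 = 1) ∨ (n = m - 1 ∧ k % 2 = 1)) then (-1:ℝ) else 1 from by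
    unfold epsN; exact if_congr h1 rfl rfl]
  split_ifs with h <;> simp [h] <;> norm_num

end Stmt9Aux

open Stmt9Aux

/-- Suppose `m` is odd and let `w₀ ∈ D_m` be the diagonal matrix sending `e_i ↦ −e_i` for
`1 ≤ i ≤ m−1` and `e_m ↦ e_m`.  Then for all integers `k, l ≥ 0` with `2k + l ≤ m−1`, the
matrix `w₀ · c_{k,l}` is an involution and is conjugate to `c_{k, (m−1)−2k−l}` by an
element of the centralizer of `w₀` in `D_m`. -/
theorem stmt9 (m : ℕ) (hm : 3 ≤ m) (hodd : Odd m)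
    (k l : ℕ) (hkl : 2 * k + l ≤ m - 1) :
    (wD m * cD m k l) * (wD m * cD m k l) = 1 ∧
    ∃ g : Matrix (Fin m) (Fin m) ℝ, InD g ∧ g * wD m = wD m * g ∧
      wD m * cD m k l = g * cD m k (m - 1 - 2 * k - l) * g⁻¹ := by
  classical
  have hm1 : m % 2 = 1 := Nat.odd_iff.mp hodd
  have h2k : 2*k ≤ m - 1 := by omega
  set l' := m - 1 - 2*k - l with hl'def
  set σ : Fin m → Fin m := fn m (sigNat k) with hσ
  set τ : Fin m → Fin m := fn m (tauNat m k) with hτ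
  have hσn : ∀ n, n < m → sigNat k n < m := by
    intro n hn; simp only [sigNat]; split_ifs <;> omega
  have hτn : ∀ n, n < m → tauNat m k n < m := by
    intro n hn; simp only [tauNat]; split_ifs <;> omega
  have vσ : ∀ j : Fin m, (σ j).val = sigNat k j.val := by
    intro j; rw [hσ]; simp only [fn]; rw [dif_pos (hσn _ j.isLt)]
  have vτ : ∀ j : Fin m, (τ j).val = tauNat m k j.val := by
    intro j; rw [hτ]; simp only [fn]; rw [dif_pos (hτn _ j.isLt)]
  have hcDl : cD m k l = mono σ (fun j => cS m k l j.val) := cD_eq m k l h2k hm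
  have hcDl' : cD m k l' = mono σ (fun j => cS m k l' j.val) := cD_eq m k l' h2k hm
  have hwD : wD m = mono (fun j : Fin m => j) (fun j => wS m j.val) := wD_eq m
  set g : Matrix (Fin m) (Fin m) ℝ :=
    mono τ (fun j => epsN m k (tauNat m k j.val)) with hg
  have hwc : wD m * cD m k l
      = mono σ (fun j => wS m (sigNat k j.val) * cS m k l j.val) := by
    rw [hwD, hcDl, mono_mul]
    exact mono_ext (fun j => rfl) (fun j => by rw [vσ])
  have hττ : ∀ x : Fin m, τ (τ x) = x := by
    intro x
    apply Fin.ext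
    rw [vτ, vτ]
    have := x.isLt
    simp only [tauNat]; split_ifs <;> omega
  have hinv : (wD m * cD m k l) * (wD m * cD m k l) = 1 := by
    rw [hwc, mono_mul, ← mono_one]
    refine mono_ext (fun j => ?_) (fun j => ?_)
    · apply Fin.ext
      rw [vσ, vσ]
      have := j.isLt
      simp only [sigNat]; split_ifs <;> omega
    · rw [vσ]
      exact sign_inv m k l hm hm1 hkl j.val j.isLt
  have hconj : (wD m * cD m k l) * g = g * cD m k l' := by
    rw [hwc, hg, hcDl', mono_mul, mono_mul]
    refine mono_ext (fun j => ?_) (fun j => ?_)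
    · apply Fin.ext
      rw [vσ, vτ, vτ, vσ]
      have := j.isLt
      simp only [sigNat, tauNat]; split_ifs <;> omega
    · rw [vτ, vσ, hl'def]
      exact sign_conj m k l hm hm1 hkl j.val j.isLt
  have hgg : g * g = 1 := by
    rw [hg, mono_mul, ← mono_one]
    refine mono_ext (fun j => hττ j) (fun j => ?_)
    · rw [vτ]
      exact sign_gg m k hm h2k j.val j.isLt
  have hgw : g * wD m = wD m * g := by
    rw [hwD, hg, mono_mul, mono_mul]
    refine mono_ext (fun j => rfl) (fun j => ?_)
    · rw [vτ]
      exact sign_gw m k hm h2k j.val j.isLt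
  have hginv : g⁻¹ = g := Matrix.inv_eq_right_inv hgg
  have hεne : ∀ n, epsN m k n ≠ 0 := by
    intro n; simp only [epsN]; split_ifs <;> norm_num
  have hInD : InD g := by
    constructor
    · refine ⟨fun i => ⟨τ i, ?_, ?_⟩, fun j => ⟨τ j, ?_, ?_⟩, fun i j => ?_⟩
      · show mono τ _ i (τ i) ≠ 0
        simp only [mono, Matrix.of_apply]
        rw [if_pos (hττ i).symm]
        exact hεne _
      · intro y hy
        rw [hg] at hy
        simp only [mono, Matrix.of_apply] at hy
        by_cases h : i = τ y
        · rw [← hττ y, ← h]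
        · rw [if_neg h] at hy; exact absurd rfl hy
      · show mono τ _ (τ j) j ≠ 0
        simp only [mono, Matrix.of_apply, if_pos rfl]
        exact hεne _
      · intro y hy
        rw [hg] at hy
        simp only [mono, Matrix.of_apply] at hy
        by_cases h : y = τ j
        · exact h
        · rw [if_neg h] at hy; exact absurd rfl hy
      · rw [hg]
        simp only [mono, Matrix.of_apply]
        by_cases h : i = τ j
        · rw [if_pos h]
          simp only [epsN]
          split_ifs
          · right; right; rfl
          · right; left; rfl
        · left; rw [if_neg h]
    · have hchar : ∀ p : Fin m × Fin m, g p.1 p.2 = -1 ↔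
          (p.1 = τ p.2 ∧ ((p.2.val < 2*k ∧ p.2.val % 2 = 1) ∨ (p.2.val = m - 1 ∧ k % 2 = 1))) := by
        intro p
        simp only [hg, mono, Matrix.of_apply]
        by_cases h : p.1 = τ p.2
        · rw [if_pos h]
          simp only [h, true_and]
          exact epsN_tau_iff m k hm h2k (p.2 : ℕ) (Fin.isLt p.2)
        · rw [if_neg h]
          simp [h]
      have e1 : {p : Fin m × Fin m // g p.1 p.2 = -1} ≃
          {j : Fin m // (j.val < 2*k ∧ j.val % 2 = 1) ∨ (j.val = m - 1 ∧ k % 2 = 1)} :=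
        { toFun := fun p => ⟨p.1.2, ((hchar p.1).mp p.2).2⟩
          invFun := fun j => ⟨(τ j.1, j.1), (hchar _).mpr ⟨rfl, j.2⟩⟩
          left_inv := fun p => by
            have h1 := ((hchar p.1).mp p.2).1
            apply Subtype.ext
            exact Prod.ext h1.symm rfl
          right_inv := fun j => rfl }
      rw [Nat.card_congr e1, Nat.card_eq_fintype_card, Fintype.card_subtype]
      have hsplit : (Finset.univ.filter (fun j : Fin m =>
            (j.val < 2*k ∧ j.val % 2 = 1) ∨ (j.val = m - 1 ∧ k % 2 = 1)))
          = (Finset.univ.filter (fun j : Fin m => j.val < 2*k ∧ j.val % 2 = 1))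
            ∪ (Finset.univ.filter (fun j : Fin m => j.val = m - 1 ∧ k % 2 = 1)) := by
        rw [← Finset.filter_or]
      have hcard1 : ∀ K : ℕ, 2*K ≤ m →
          (Finset.univ.filter (fun j : Fin m => j.val < 2*K ∧ j.val % 2 = 1)).card = K := by
        intro K
        induction K with
        | zero => intro _; convert Finset.card_empty; ext j; simp
        | succ K ih =>
          intro hK
          have h1 : (Finset.univ.filter (fun j : Fin m => j.val < 2*(K+1) ∧ j.val % 2 = 1))
              = insert (⟨2*K+1, by omega⟩ : Fin m)
                  (Finset.univ.filter (fun j : Fin m => j.val < 2*K ∧ j.val % 2 = 1)) := by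
            ext j
            simp [Fin.ext_iff]
            omega
          rw [h1, Finset.card_insert_of_notMem (by simp), ih (by omega)]
      have hcard2 : (Finset.univ.filter
          (fun j : Fin m => j.val = m - 1 ∧ k % 2 = 1)).card = k % 2 := by
        by_cases hk : k % 2 = 1
        · have h1 : (Finset.univ.filter (fun j : Fin m => j.val = m - 1 ∧ k % 2 = 1))
              = {(⟨m - 1, by omega⟩ : Fin m)} := by
            ext j; simp [Fin.ext_iff, hk]
          rw [h1, Finset.card_singleton, hk]
        · have h1 : (Finset.univ.filter (fun j : Fin m => j.val = m - 1 ∧ k % 2 = 1))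
              = ∅ := by
            ext j; simp [hk]
          rw [h1, Finset.card_empty]
          omega
      have hdisj : Disjoint
          (Finset.univ.filter (fun j : Fin m => j.val < 2*k ∧ j.val % 2 = 1))
          (Finset.univ.filter (fun j : Fin m => j.val = m - 1 ∧ k % 2 = 1)) := by
        rw [Finset.disjoint_left]
        intro a ha hb
        simp only [Finset.mem_filter] at ha hb
        omega
      rw [hsplit, Finset.card_union_of_disjoint hdisj, hcard1 k (by omega), hcard2]
      rw [Nat.even_iff]
      omega
  refine ⟨hinv, g, hInD, hgw, ?_⟩
  rw [hginv]
  calc wD m * cD m k l = (wD m * cD m k l) * (g * g) := by rw [hgg, mul_one]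
    _ = ((wD m * cD m k l) * g) * g := (mul_assoc _ g g).symm
    _ = (g * cD m k l') * g := by rw [hconj]
end

section
/- Suppose m is even. Then for all integers k,l ≥ 0 with 2k + l ≤ m−1, the matrix −c_{k,l} is conjugate in D_m to c_{k, (m−1)−2k−l}. -/
/-- ℕ-indexed version of the entries of `cD`. -/
def cDent (m k l i j : ℕ) : ℝ :=
  if j < 2 * k then
    (if i = (if j % 2 = 0 then j + 1 else j - 1) then 1 else 0)
  else if (l % 2 = 1 ∧ m - l - 1 ≤ j) ∨ (l % 2 = 0 ∧ m - l - 1 ≤ j ∧ j < m - 1) then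
    (if i = j then -1 else 0)
  else (if i = j then 1 else 0)

lemma cD_apply (m k l : ℕ) (i j : Fin m) : cD m k l i j = cDent m k l ↑i ↑j := by
  simp [cD, cDent, Fin.ext_iff]

/-- The permutation underlying the conjugating matrix. -/
def fP (m k l j : ℕ) : ℕ :=
  if j < 2 * k then j
  else if j = m - 1 then m - 1
  else if 2 * k + l ≤ j then j - l
  else j + (m - 1 - 2 * k - l)

/-- The inverse permutation. -/
def fP' (m k l j : ℕ) : ℕ :=
  if j < 2 * k then j
  else if j = m - 1 then m - 1
  else if j < 2 * k + (m - 1 - 2 * k - l) then j + l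
  else j - (m - 1 - 2 * k - l)

/-- The signs of the conjugating matrix. -/
def epsP (m k j : ℕ) : ℝ :=
  if (j < 2 * k ∧ j % 2 = 1) ∨ (j = m - 1 ∧ k % 2 = 1) then -1 else 1

lemma fP_lt {m k l j : ℕ} (hkl : 2 * k + l ≤ m - 1) (hj : j < m) : fP m k l j < m := by
  unfold fP; split_ifs <;> omega

lemma fP'_lt {m k l j : ℕ} (hj : j < m) : fP' m k l j < m := by
  unfold fP'; split_ifs <;> omega

lemma fP'_fP {m k l j : ℕ} (hj : j < m) : fP' m k l (fP m k l j) = j := by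
  unfold fP fP'; split_ifs <;> omega

lemma fP_fP' {m k l j : ℕ} (hj : j < m) : fP m k l (fP' m k l j) = j := by
  unfold fP fP'; split_ifs <;> omega

lemma epsP_mul_self (m k j : ℕ) : epsP m k j * epsP m k j = 1 := by
  unfold epsP; split_ifs <;> norm_num

lemma epsP_ne_zero (m k j : ℕ) : epsP m k j ≠ 0 := by
  unfold epsP; split_ifs <;> norm_num

lemma epsP_iff (m k j : ℕ) :
    epsP m k j = -1 ↔ ((j < 2 * k ∧ j % 2 = 1) ∨ (j = m - 1 ∧ k % 2 = 1)) := by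
  unfold epsP; split_ifs with h
  · exact iff_of_true rfl h
  · exact iff_of_false (by norm_num) h

lemma fP_ge {m k l i : ℕ} (hkl : 2 * k + l ≤ m - 1) (h : ¬ i < 2 * k) :
    ¬ fP m k l i < 2 * k := by
  unfold fP; split_ifs <;> omega

lemma fP_inj {m k l i j : ℕ} (hi : i < m) (hj : j < m)
    (h : fP m k l i = fP m k l j) : i = j := by
  have h2 := congrArg (fP' m k l) h
  rwa [fP'_fP hi, fP'_fP hj] at h2

lemma cDent_swap (m k l i j : ℕ) (hj : j < 2 * k) :
    cDent m k l i j = if i = (if j % 2 = 0 then j + 1 else j - 1) then 1 else 0 := by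
  unfold cDent; rw [if_pos hj]

lemma cDent_ne (m k l : ℕ) {i j : ℕ} (h2k : ¬ j < 2 * k) (hij : i ≠ j) :
    cDent m k l i j = 0 := by
  unfold cDent; split_ifs <;> first | rfl | (exfalso; omega)

lemma cDent_diag (m k l : ℕ) {j : ℕ} (h2k : ¬ j < 2 * k) :
    cDent m k l j j =
      if (l % 2 = 1 ∧ m - l - 1 ≤ j) ∨ (l % 2 = 0 ∧ m - l - 1 ≤ j ∧ j < m - 1) then -1
      else 1 := by
  unfold cDent; rw [if_neg h2k]; split_ifs <;> simp_all

lemma core (m k l : ℕ) (hm2 : m % 2 = 0) (hkl : 2 * k + l ≤ m - 1)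
    (i j : ℕ) (hi : i < m) (hj : j < m) :
    epsP m k i * cDent m k (m - 1 - 2 * k - l) i j
      = -(cDent m k l (fP m k l i) (fP m k l j)) * epsP m k j := by
  by_cases hj1 : j < 2 * k
  · have hfj : fP m k l j = j := by unfold fP; rw [if_pos hj1]
    rw [hfj, cDent_swap _ _ _ _ _ hj1, cDent_swap _ _ _ _ _ hj1]
    by_cases hi1 : i < 2 * k
    · have hfi : fP m k l i = i := by unfold fP; rw [if_pos hi1]
      rw [hfi]
      unfold epsP
      split_ifs <;> first | (exfalso; omega) | norm_num
    · have hge := fP_ge (l := l) hkl hi1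
      rw [if_neg (show ¬ i = (if j % 2 = 0 then j + 1 else j - 1) by
            split_ifs <;> omega),
          if_neg (show ¬ fP m k l i = (if j % 2 = 0 then j + 1 else j - 1) by
            split_ifs <;> omega)]
      ring
  · have h2k' : ¬ fP m k l j < 2 * k := fP_ge hkl hj1
    by_cases hij : i = j
    · subst hij
      rw [cDent_diag _ _ _ hj1, cDent_diag _ _ _ h2k']
      have hXY : (if ((m - 1 - 2 * k - l) % 2 = 1 ∧ m - (m - 1 - 2 * k - l) - 1 ≤ i) ∨
            ((m - 1 - 2 * k - l) % 2 = 0 ∧ m - (m - 1 - 2 * k - l) - 1 ≤ i ∧ i < m - 1)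
            then (-1 : ℝ) else 1)
          = -(if (l % 2 = 1 ∧ m - l - 1 ≤ fP m k l i) ∨
            (l % 2 = 0 ∧ m - l - 1 ≤ fP m k l i ∧ fP m k l i < m - 1)
            then (-1 : ℝ) else 1) := by
        unfold fP
        split_ifs <;> first | (exfalso; omega) | norm_num
      rw [hXY]; ring
    · rw [cDent_ne _ _ _ hj1 hij, cDent_ne _ _ _ h2k' (fun h => hij (fP_inj hi hj h))]
      ring

/-- Suppose `m` is even.  Then for all integers `k, l ≥ 0` with `2k + l ≤ m−1`, the matrix
`−c_{k,l}` is conjugate in `D_m` to `c_{k, (m−1)−2k−l}`. -/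
theorem stmt10 (m : ℕ) (hm : 4 ≤ m) (heven : Even m)
    (k l : ℕ) (hkl : 2 * k + l ≤ m - 1) :
    ∃ g : Matrix (Fin m) (Fin m) ℝ, InD g ∧
      -(cD m k l) = g * cD m k (m - 1 - 2 * k - l) * g⁻¹ := by
  have hm2 : m % 2 = 0 := Nat.even_iff.mp heven
  set g : Matrix (Fin m) (Fin m) ℝ :=
    Matrix.of (fun i j : Fin m =>
      if (i : ℕ) = fP m k l (j : ℕ) then epsP m k (j : ℕ) else 0) with hg
  set π : Equiv.Perm (Fin m) :=
    { toFun := fun j => ⟨fP m k l ↑j, fP_lt hkl j.isLt⟩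
      invFun := fun j => ⟨fP' m k l ↑j, fP'_lt j.isLt⟩
      left_inv := fun j => Fin.ext (fP'_fP j.isLt)
      right_inv := fun j => Fin.ext (fP_fP' j.isLt) } with hπ
  have hπval : ∀ j : Fin m, ((π j : Fin m) : ℕ) = fP m k l ↑j := fun _ => rfl
  have hfix : ∀ i : Fin m, (i : ℕ) = fP m k l ↑(π.symm i) := by
    intro i
    rw [← hπval (π.symm i), π.apply_symm_apply]
  have hgne : ∀ i j : Fin m, g i j ≠ 0 → i = π j := by
    intro i j hij
    by_cases hc : (i : ℕ) = fP m k l ↑j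
    · exact Fin.ext (by rw [hc, hπval])
    · exfalso; apply hij; rw [hg]; simp only [Matrix.of_apply]; rw [if_neg hc]
  have hrow : ∀ (A : Matrix (Fin m) (Fin m) ℝ) (i j : Fin m),
      (g * A) i j = epsP m k ↑(π.symm i) * A (π.symm i) j := by
    intro A i j
    rw [Matrix.mul_apply, Finset.sum_eq_single (π.symm i)]
    · rw [hg]; simp only [Matrix.of_apply]; rw [if_pos (hfix i)]
    · intro b _ hb
      rw [hg]; simp only [Matrix.of_apply]
      rw [if_neg, zero_mul]
      intro hc
      apply hb
      have hπb : π b = i := Fin.ext (by rw [hπval]; exact hc.symm)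
      rw [← hπb, Equiv.symm_apply_apply]
    · intro h; exact absurd (Finset.mem_univ _) h
  have hcol : ∀ (A : Matrix (Fin m) (Fin m) ℝ) (i j : Fin m),
      (A * g) i j = A i (π j) * epsP m k ↑j := by
    intro A i j
    rw [Matrix.mul_apply, Finset.sum_eq_single (π j)]
    · rw [hg]; simp only [Matrix.of_apply]; rw [if_pos (hπval j)]
    · intro b _ hb
      rw [hg]; simp only [Matrix.of_apply]
      rw [if_neg, mul_zero]
      intro hc
      exact hb (Fin.ext (by rw [hπval]; exact hc))
    · intro h; exact absurd (Finset.mem_univ _) h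
  have hgT : g * (Matrix.transpose g) = 1 := by
    ext i j
    rw [hrow (Matrix.transpose g) i j, Matrix.transpose_apply]
    have hcond : ((j : ℕ) = fP m k l ↑(π.symm i)) ↔ j = i := by
      rw [← hfix i]
      exact Fin.val_inj
    rw [hg]; simp only [Matrix.of_apply, Matrix.one_apply]
    by_cases h : i = j
    · rw [if_pos (hcond.mpr h.symm), if_pos h, epsP_mul_self]
    · rw [if_neg (fun hc => h (hcond.mp hc).symm), mul_zero, if_neg h]
  have key : g * cD m k (m - 1 - 2 * k - l) = (-(cD m k l)) * g := by
    ext i j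
    rw [hrow, hcol, Matrix.neg_apply, cD_apply, cD_apply, hπval j]
    have h1 := hfix i
    rw [show (i : ℕ) = fP m k l ↑(π.symm i) from h1]
    exact core m k l hm2 hkl _ _ (fP'_lt i.isLt) j.isLt
  refine ⟨g, ⟨⟨?_, ?_, ?_⟩, ?_⟩, ?_⟩
  · -- unique nonzero in each row
    intro i
    refine ⟨π.symm i, ?_, ?_⟩
    · show g i (π.symm i) ≠ 0
      rw [hg]; simp only [Matrix.of_apply]; rw [if_pos (hfix i)]
      exact epsP_ne_zero _ _ _
    · intro y hy
      have := hgne i y hy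
      rw [this, Equiv.symm_apply_apply]
  · -- unique nonzero in each column
    intro j
    refine ⟨π j, ?_, ?_⟩
    · show g (π j) j ≠ 0
      rw [hg]; simp only [Matrix.of_apply]; rw [if_pos (hπval j)]
      exact epsP_ne_zero _ _ _
    · intro y hy
      exact hgne y j hy
  · -- entries are 0, 1, -1
    intro i j
    rw [hg]; simp only [Matrix.of_apply]
    split_ifs with h
    · unfold epsP; split_ifs <;> norm_num
    · left; rfl
  · -- even number of -1 entries
    have hmem : ∀ p : Fin m × Fin m, g p.1 p.2 = -1 →
        ((p.1 : ℕ) = fP m k l ↑p.2 ∧ epsP m k ↑p.2 = -1) := by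
      intro p hp
      rw [hg] at hp; simp only [Matrix.of_apply] at hp
      by_cases hc : (p.1 : ℕ) = fP m k l ↑p.2
      · exact ⟨hc, by rwa [if_pos hc] at hp⟩
      · rw [if_neg hc] at hp; norm_num at hp
    have e1 : {p : Fin m × Fin m // g p.1 p.2 = -1} ≃ {j : Fin m // epsP m k ↑j = -1} :=
      { toFun := fun p => ⟨p.1.2, (hmem p.1 p.2).2⟩
        invFun := fun j => ⟨(π j.1, j.1), by
          rw [hg]; simp only [Matrix.of_apply]; rw [if_pos (hπval j.1)]; exact j.2⟩
        left_inv := fun p => by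
          apply Subtype.ext
          have h1 : p.1.1 = π p.1.2 := Fin.ext (by rw [hπval]; exact (hmem p.1 p.2).1)
          exact Prod.ext h1.symm rfl
        right_inv := fun j => rfl }
    have e2 : {j : Fin m // epsP m k ↑j = -1} ≃ Fin (k + k % 2) :=
      { toFun := fun j => ⟨if (j : ℕ) < 2 * k then (j : ℕ) / 2 else k, by
          have h := (epsP_iff m k ↑j).mp j.2
          split_ifs with hc <;> omega⟩
        invFun := fun t => ⟨⟨if (t : ℕ) < k then 2 * (t : ℕ) + 1 else m - 1, by
            have := t.isLt; split_ifs <;> omega⟩, by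
          rw [epsP_iff]
          have := t.isLt
          dsimp only
          split_ifs <;> omega⟩
        left_inv := fun j => by
          have h := (epsP_iff m k ↑j).mp j.2
          apply Subtype.ext; apply Fin.ext
          dsimp only
          split_ifs <;> omega
        right_inv := fun t => by
          have := t.isLt
          apply Fin.ext
          dsimp only
          split_ifs <;> omega }
    rw [Nat.card_congr (e1.trans e2), Nat.card_eq_fintype_card, Fintype.card_fin]
    exact Nat.even_iff.mpr (by omega)
  · -- the conjugation identity
    rw [Matrix.inv_eq_right_inv hgT]
    calc -(cD m k l) = -(cD m k l) * (g * (Matrix.transpose g)) := by rw [hgT, Matrix.mul_one]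
      _ = (-(cD m k l) * g) * (Matrix.transpose g) := by rw [Matrix.mul_assoc]
      _ = g * cD m k (m - 1 - 2 * k - l) * (Matrix.transpose g) := by rw [key]
end

section
/- If m ≡ 0 (mod 4), then −c₋ is conjugate in D_m to c₋ and −c₊ is conjugate in D_m to c₊. If m ≡ 2 (mod 4), then −c₋ is conjugate in D_m to c₊ (and hence −c₊ is conjugate in D_m to c₋). -/
/-- The involution `c₋ ∈ D_m` for `m = 2p` (0-indexed rows/columns): it swaps the standard
basis vectors `e_{2j−1} ↔ e_{2j}` for `1 ≤ j ≤ p` (0-indexed: `e_{2j} ↔ e_{2j+1}` for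
`0 ≤ j < p`). -/
def cminus (p : ℕ) : Matrix (Fin (2 * p)) (Fin (2 * p)) ℝ :=
  Matrix.of fun i j =>
    if (i : ℕ) = (if (j : ℕ) % 2 = 0 then (j : ℕ) + 1 else (j : ℕ) - 1) then 1 else 0

/-- The involution `c₊ ∈ D_m` for `m = 2p` (0-indexed rows/columns): it swaps
`e_{2j−1} ↔ e_{2j}` for `1 ≤ j ≤ p−1` (0-indexed: `e_{2j} ↔ e_{2j+1}` for `0 ≤ j < p−1`)
and sends `e_{m−1} ↦ −e_m`, `e_m ↦ −e_{m−1}` (0-indexed: `e_{m−2} ↦ −e_{m−1}`,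
`e_{m−1} ↦ −e_{m−2}`). -/
def cplus (p : ℕ) : Matrix (Fin (2 * p)) (Fin (2 * p)) ℝ :=
  Matrix.of fun i j =>
    if (j : ℕ) < 2 * p - 2 then
      (if (i : ℕ) = (if (j : ℕ) % 2 = 0 then (j : ℕ) + 1 else (j : ℕ) - 1) then 1 else 0)
    else
      (if (i : ℕ) = (if (j : ℕ) = 2 * p - 2 then 2 * p - 1 else 2 * p - 2) then -1 else 0)


/-- Diagonal sign vector: `-1` at odd indices below `2k`, else `1`. -/
def dvec (p k : ℕ) : Fin (2 * p) → ℝ :=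
  fun i => if (i : ℕ) % 2 = 1 ∧ (i : ℕ) < 2 * k then -1 else 1

lemma dvec_pm (p k : ℕ) (i : Fin (2 * p)) : dvec p k i = 1 ∨ dvec p k i = -1 := by
  unfold dvec; split_ifs <;> simp

lemma dvec_sq (p k : ℕ) (i : Fin (2 * p)) : dvec p k i * dvec p k i = 1 := by
  unfold dvec; split_ifs <;> norm_num

lemma diag_neg_one {n : ℕ} (d : Fin n → ℝ) {i j : Fin n}
    (h : Matrix.diagonal d i j = -1) : i = j ∧ d i = -1 := by
  by_cases hij : i = j
  · subst hij; rw [Matrix.diagonal_apply_eq] at h; exact ⟨rfl, h⟩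
  · rw [Matrix.diagonal_apply_ne _ hij] at h; norm_num at h

lemma diag_signedPerm {n : ℕ} (d : Fin n → ℝ) (hd : ∀ i, d i = 1 ∨ d i = -1) :
    IsSignedPerm (Matrix.diagonal d) := by
  have hne : ∀ i, d i ≠ 0 := by intro i; rcases hd i with h | h <;> rw [h] <;> norm_num
  refine ⟨fun i => ⟨i, by simpa using hne i, fun j hj => ?_⟩,
          fun j => ⟨j, by simpa using hne j, fun i hi => ?_⟩, fun i j => ?_⟩
  · by_contra h; exact hj (Matrix.diagonal_apply_ne d (Ne.symm h))
  · by_contra h; exact hi (Matrix.diagonal_apply_ne d h)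
  · by_cases hij : i = j
    · subst hij; rw [Matrix.diagonal_apply_eq]; right; exact hd i
    · left; exact Matrix.diagonal_apply_ne d hij

lemma card_diag {n : ℕ} (d : Fin n → ℝ) :
    Nat.card {q : Fin n × Fin n // Matrix.diagonal d q.1 q.2 = -1} =
      Nat.card {i : Fin n // d i = -1} := by
  apply Nat.card_congr
  refine ⟨fun q => ⟨q.1.1, (diag_neg_one d q.2).2⟩,
          fun i => ⟨(i.1, i.1), by rw [Matrix.diagonal_apply_eq]; exact i.2⟩,
          fun q => ?_, fun i => rfl⟩
  obtain ⟨⟨i, j⟩, h⟩ := q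
  obtain ⟨h1, -⟩ := diag_neg_one d h
  apply Subtype.ext
  simp only [Prod.mk.injEq]
  exact ⟨trivial, h1⟩

lemma dvec_eq_neg_one (p k : ℕ) (i : Fin (2 * p)) :
    dvec p k i = -1 ↔ ((i : ℕ) % 2 = 1 ∧ (i : ℕ) < 2 * k) := by
  unfold dvec; split_ifs with h
  · exact iff_of_true rfl h
  · exact iff_of_false (by norm_num) h

lemma card_dvec (p k : ℕ) (hk : k ≤ p) :
    Nat.card {i : Fin (2 * p) // dvec p k i = -1} = k := by
  have e1 := Equiv.subtypeEquivRight (fun i => dvec_eq_neg_one p k i)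
  have e2 : {i : Fin (2 * p) // (i : ℕ) % 2 = 1 ∧ (i : ℕ) < 2 * k} ≃ Fin k := by
    refine ⟨fun i => ⟨(i.1 : ℕ) / 2, by have h2 := i.2.2; omega⟩,
            fun j => ⟨⟨2 * (j : ℕ) + 1, by have := j.2; omega⟩, by
              refine ⟨?_, ?_⟩ <;> · show _ ; simp only [Fin.val_mk]; omega⟩, ?_, ?_⟩
    · intro i
      apply Subtype.ext; apply Fin.ext
      show 2 * ((i.1 : ℕ) / 2) + 1 = (i.1 : ℕ)
      have h1 := i.2.1; omega
    · intro j
      apply Fin.ext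
      show (2 * (j : ℕ) + 1) / 2 = (j : ℕ)
      omega
  rw [Nat.card_congr e1, Nat.card_congr e2, Nat.card_eq_fintype_card, Fintype.card_fin]

lemma gInD (p k : ℕ) (hk : k ≤ p) (hke : Even k) :
    InD (Matrix.diagonal (dvec p k)) := by
  refine ⟨diag_signedPerm _ (dvec_pm p k), ?_⟩
  rw [card_diag, card_dvec p k hk]
  exact hke

lemma conj_diag (p k : ℕ) (A B : Matrix (Fin (2 * p)) (Fin (2 * p)) ℝ)
    (h : ∀ i j, (-A) i j = dvec p k i * B i j * dvec p k j) :
    -A = Matrix.diagonal (dvec p k) * B * (Matrix.diagonal (dvec p k))⁻¹ := by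
  have hgg : Matrix.diagonal (dvec p k) * Matrix.diagonal (dvec p k) = 1 := by
    rw [Matrix.diagonal_mul_diagonal]
    have h1 : (fun i => dvec p k i * dvec p k i) = fun _ => (1 : ℝ) :=
      funext fun i => dvec_sq p k i
    rw [h1]
    exact Matrix.diagonal_one
  rw [Matrix.inv_eq_right_inv hgg]
  ext i j
  rw [Matrix.mul_diagonal, Matrix.diagonal_mul]
  exact h i j


lemma e1 (p : ℕ) : ∀ i j, (-(cminus p)) i j = dvec p p i * cminus p i j * dvec p p j := by
  intro i j
  have ha := i.isLt; have hb := j.isLt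
  simp only [Matrix.neg_apply, cminus, dvec, Matrix.of_apply]
  split_ifs <;> first | omega | norm_num

lemma e2 (p : ℕ) (hp : 2 ≤ p) :
    ∀ i j, (-(cplus p)) i j = dvec p p i * cplus p i j * dvec p p j := by
  intro i j
  have ha := i.isLt; have hb := j.isLt
  simp only [Matrix.neg_apply, cplus, dvec, Matrix.of_apply]
  split_ifs <;> first | omega | norm_num

lemma e3 (p : ℕ) (hp : 2 ≤ p) :
    ∀ i j, (-(cminus p)) i j = dvec p (p - 1) i * cplus p i j * dvec p (p - 1) j := by
  intro i j
  have ha := i.isLt; have hb := j.isLt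
  simp only [Matrix.neg_apply, cminus, cplus, dvec, Matrix.of_apply]
  split_ifs <;> first | omega | norm_num

lemma e4 (p : ℕ) (hp : 2 ≤ p) :
    ∀ i j, (-(cplus p)) i j = dvec p (p - 1) i * cminus p i j * dvec p (p - 1) j := by
  intro i j
  have ha := i.isLt; have hb := j.isLt
  simp only [Matrix.neg_apply, cminus, cplus, dvec, Matrix.of_apply]
  split_ifs <;> first | omega | norm_num

/-- Fix an even integer `m = 2p ≥ 4`.  If `m ≡ 0 (mod 4)`, then `−c₋` is conjugate in `D_m`
to `c₋` and `−c₊` is conjugate in `D_m` to `c₊`.  If `m ≡ 2 (mod 4)`, then `−c₋` is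
conjugate in `D_m` to `c₊` (and hence `−c₊` is conjugate in `D_m` to `c₋`). -/
theorem stmt11 (p : ℕ) (hp : 2 ≤ p) :
    (2 * p % 4 = 0 →
      (∃ g : Matrix (Fin (2 * p)) (Fin (2 * p)) ℝ, InD g ∧
        -(cminus p) = g * cminus p * g⁻¹) ∧
      (∃ g : Matrix (Fin (2 * p)) (Fin (2 * p)) ℝ, InD g ∧
        -(cplus p) = g * cplus p * g⁻¹)) ∧
    (2 * p % 4 = 2 →
      (∃ g : Matrix (Fin (2 * p)) (Fin (2 * p)) ℝ, InD g ∧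
        -(cminus p) = g * cplus p * g⁻¹) ∧
      (∃ g : Matrix (Fin (2 * p)) (Fin (2 * p)) ℝ, InD g ∧
        -(cplus p) = g * cminus p * g⁻¹)) := by
  constructor
  · intro h4
    have hke : Even p := Nat.even_iff.mpr (by omega)
    exact ⟨⟨_, gInD p p le_rfl hke, conj_diag p p _ _ (e1 p)⟩,
           ⟨_, gInD p p le_rfl hke, conj_diag p p _ _ (e2 p hp)⟩⟩
  · intro h2
    have hke : Even (p - 1) := Nat.even_iff.mpr (by omega)
    exact ⟨⟨_, gInD p (p - 1) (by omega) hke, conj_diag p (p - 1) _ _ (e3 p hp)⟩,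
           ⟨_, gInD p (p - 1) (by omega) hke, conj_diag p (p - 1) _ _ (e4 p hp)⟩⟩
end

section
/- The involutions c₋ and c₊ are not conjugate in D_m, and neither c₋ nor c₊ is conjugate in D_m to any of the involutions c_{k,l} with integers k,l ≥ 0 and 2k + l ≤ m−1. -/
/- ===== auxiliary lemmas ===== -/

theorem signedPerm_struct {m : ℕ} {M : Matrix (Fin m) (Fin m) ℝ} (h : IsSignedPerm M) :
    ∃ σ : Equiv.Perm (Fin m), ∃ ε : Fin m → ℝ, (∀ j, ε j = 1 ∨ ε j = -1) ∧
      ∀ i j, M i j = if i = σ j then ε j else 0 := by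
  classical
  have hf : ∀ j : Fin m, ∃ i, M i j ≠ 0 := fun j => (h.2.1 j).exists
  set f : Fin m → Fin m := fun j => (hf j).choose with hfdef
  have hfspec : ∀ j, M (f j) j ≠ 0 := fun j => (hf j).choose_spec
  have hinj : Function.Injective f := by
    intro j₁ j₂ hj
    obtain ⟨j, _, hu⟩ := h.1 (f j₁)
    have h1 := hu j₁ (hfspec j₁)
    have h2 := hu j₂ (by rw [hj]; exact hfspec j₂)
    rw [h1, h2]
  let σ : Equiv.Perm (Fin m) := Equiv.ofBijective f (Finite.injective_iff_bijective.mp hinj)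
  refine ⟨σ, fun j => M (f j) j, fun j => ?_, fun i j => ?_⟩
  · rcases h.2.2 (f j) j with h0 | h1 | h2
    · exact absurd h0 (hfspec j)
    · exact Or.inl h1
    · exact Or.inr h2
  · have hσ : σ j = f j := rfl
    split
    · next heq => rw [heq, hσ]
    · next hne =>
      by_contra hMij
      obtain ⟨i', _, hu⟩ := h.2.1 j
      have := (hu i hMij).trans (hu (f j) (hfspec j)).symm
      exact hne (this.trans hσ.symm)

theorem parity_lemma {m : ℕ} {M : Matrix (Fin m) (Fin m) ℝ} (σ : Equiv.Perm (Fin m))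
    (ε : Fin m → ℝ) (hε : ∀ j, ε j = 1 ∨ ε j = -1)
    (hM : ∀ i j, M i j = if i = σ j then ε j else 0)
    (hcard : Even (Nat.card {p : Fin m × Fin m // M p.1 p.2 = -1})) :
    ∏ j, ε j = 1 := by
  classical
  have hiff : ∀ p : Fin m × Fin m, M p.1 p.2 = -1 ↔ (p.1 = σ p.2 ∧ ε p.2 = -1) := by
    intro p
    rw [hM]
    split
    · next he => simp [he]
    · next he => constructor <;> intro hh <;> simp_all
  have hequiv : {p : Fin m × Fin m // M p.1 p.2 = -1} ≃ {j : Fin m // ε j = -1} := by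
    refine ⟨fun p => ⟨p.1.2, ((hiff p.1).mp p.2).2⟩,
      fun j => ⟨(σ j.1, j.1), (hiff _).mpr ⟨rfl, j.2⟩⟩, ?_, ?_⟩
    · rintro ⟨⟨a, b⟩, hab⟩
      have := ((hiff _).mp hab).1
      simp only at this ⊢
      simp [this]
    · rintro ⟨j, hj⟩; rfl
  rw [Nat.card_congr hequiv, Nat.card_eq_fintype_card, Fintype.card_subtype] at hcard
  have : ∏ j, ε j = ∏ j, (if ε j = -1 then (-1 : ℝ) else 1) := by
    refine Finset.prod_congr rfl fun j _ => ?_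
    rcases hε j with h1 | h2
    · rw [h1]; norm_num
    · rw [h2]; norm_num
  rw [this, Finset.prod_ite, Finset.prod_const, Finset.prod_const_one, mul_one]
  exact Even.neg_one_pow hcard

theorem mul_transpose_one {m : ℕ} {g : Matrix (Fin m) (Fin m) ℝ} (σ : Equiv.Perm (Fin m))
    (ε : Fin m → ℝ) (hε : ∀ j, ε j = 1 ∨ ε j = -1)
    (hg : ∀ i j, g i j = if i = σ j then ε j else 0) :
    g * g.transpose = 1 := by
  classical
  ext i k
  rw [Matrix.mul_apply]
  have : ∀ j, g i j * g.transpose j k = if j = σ.symm i then (if i = k then 1 else 0) else 0 := by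
    intro j
    rw [Matrix.transpose_apply, hg, hg]
    by_cases hj : j = σ.symm i
    · subst hj
      simp only [Equiv.apply_symm_apply, eq_self_iff_true, if_true]
      by_cases hik : i = k
      · subst hik
        simp only [if_pos rfl]
        rcases hε (σ.symm i) with h | h <;> rw [h] <;> norm_num
      · rw [if_neg (fun h : k = i => hik h.symm), if_neg hik, mul_zero]
    · rw [if_neg (fun h => hj (by rw [h, Equiv.symm_apply_apply])), if_neg hj, zero_mul]
  rw [Finset.sum_congr rfl (fun j _ => this j), Finset.sum_ite_eq' Finset.univ (σ.symm i)]
  simp [Matrix.one_apply]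

theorem conj_entry {m : ℕ} {c d g : Matrix (Fin m) (Fin m) ℝ} (σ : Equiv.Perm (Fin m))
    (ε : Fin m → ℝ) (hg : ∀ i j, g i j = if i = σ j then ε j else 0)
    (hc : c = g * d * g.transpose) (a b : Fin m) :
    c (σ a) (σ b) = ε a * ε b * d a b := by
  classical
  subst hc
  rw [Matrix.mul_apply]
  have hgd : ∀ k, (g * d) (σ a) k = ε a * d a k := by
    intro k
    rw [Matrix.mul_apply]
    have : ∀ j, g (σ a) j * d j k = if j = a then ε a * d a k else 0 := by
      intro j
      rw [hg]
      by_cases hj : j = a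
      · subst hj; simp
      · rw [if_neg (fun h => hj (σ.injective h).symm), zero_mul, if_neg hj]
    rw [Finset.sum_congr rfl (fun j _ => this j), Finset.sum_ite_eq' Finset.univ a]
    simp
  have : ∀ k, (g * d) (σ a) k * g.transpose k (σ b) =
      if k = b then ε a * ε b * d a b else 0 := by
    intro k
    rw [hgd, Matrix.transpose_apply, hg]
    by_cases hk : k = b
    · subst hk; simp; ring
    · rw [if_neg (fun h => hk (σ.injective h).symm), mul_zero, if_neg hk]
  rw [Finset.sum_congr rfl (fun k _ => this k), Finset.sum_ite_eq' Finset.univ b]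
  simp

/-- If `c` has zero diagonal and `d` has a nonzero diagonal entry, they are not
conjugate by any invertible signed permutation. -/
theorem not_conj_of_diag {m : ℕ} {c d : Matrix (Fin m) (Fin m) ℝ}
    (hc : ∀ i, c i i = 0) (i0 : Fin m) (hd : d i0 i0 ≠ 0) :
    ¬ ∃ g : Matrix (Fin m) (Fin m) ℝ, InD g ∧ c = g * d * g⁻¹ := by
  rintro ⟨g, ⟨hsp, _⟩, hconj⟩
  obtain ⟨σ, ε, hε, hg⟩ := signedPerm_struct hsp
  have h1 : g * g.transpose = 1 := mul_transpose_one σ ε hε hg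
  rw [Matrix.inv_eq_right_inv h1] at hconj
  have key := conj_entry σ ε hg hconj i0 i0
  rw [hc] at key
  have hε2 : ε i0 * ε i0 = 1 := by
    rcases hε i0 with h | h <;> rw [h] <;> norm_num
  rw [hε2, one_mul] at key
  exact hd key.symm

theorem cminus_diag (p : ℕ) (i : Fin (2 * p)) : cminus p i i = 0 := by
  show (if (i : ℕ) = (if (i : ℕ) % 2 = 0 then (i : ℕ) + 1 else (i : ℕ) - 1) then (1:ℝ) else 0) = 0
  rw [if_neg]
  split <;> omega

theorem cplus_diag (p : ℕ) (i : Fin (2 * p)) : cplus p i i = 0 := by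
  have hi := i.isLt
  show (if (i : ℕ) < 2 * p - 2 then
      (if (i : ℕ) = (if (i : ℕ) % 2 = 0 then (i : ℕ) + 1 else (i : ℕ) - 1) then (1:ℝ) else 0)
    else (if (i : ℕ) = (if (i : ℕ) = 2 * p - 2 then 2 * p - 1 else 2 * p - 2) then -1 else 0)) = 0
  split
  · rw [if_neg]; split <;> omega
  · rw [if_neg]; split <;> omega

theorem cminus_zero_or_one (p : ℕ) (i j : Fin (2 * p)) :
    cminus p i j = 0 ∨ cminus p i j = 1 := by
  show (if (i : ℕ) = (if (j : ℕ) % 2 = 0 then (j : ℕ) + 1 else (j : ℕ) - 1) then (1:ℝ) else 0) = 0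
    ∨ (if (i : ℕ) = (if (j : ℕ) % 2 = 0 then (j : ℕ) + 1 else (j : ℕ) - 1) then (1:ℝ) else 0) = 1
  by_cases h : (i : ℕ) = (if (j : ℕ) % 2 = 0 then (j : ℕ) + 1 else (j : ℕ) - 1)
  · exact Or.inr (if_pos h)
  · exact Or.inl (if_neg h)

theorem prod_range_two_mul (f : ℕ → ℝ) (n : ℕ) :
    ∏ j ∈ Finset.range (2 * n), f j = ∏ t ∈ Finset.range n, (f (2 * t) * f (2 * t + 1)) := by
  induction n with
  | zero => simp
  | succ n ih =>
    rw [Finset.prod_range_succ, ← ih, show 2 * (n + 1) = 2 * n + 1 + 1 by ring,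
      Finset.prod_range_succ, Finset.prod_range_succ, mul_assoc]


/-- Fix an even integer `m = 2p ≥ 4`.  The involutions `c₋` and `c₊` are not conjugate in
`D_m`, and neither `c₋` nor `c₊` is conjugate in `D_m` to any of the involutions
`c_{k,l}` with integers `k, l ≥ 0` and `2k + l ≤ m − 1`. -/
theorem stmt12 (p : ℕ) (hp : 2 ≤ p) :
    (¬ ∃ g : Matrix (Fin (2 * p)) (Fin (2 * p)) ℝ, InD g ∧
        cminus p = g * cplus p * g⁻¹) ∧
    (∀ k l : ℕ, 2 * k + l ≤ 2 * p - 1 →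
      (¬ ∃ g : Matrix (Fin (2 * p)) (Fin (2 * p)) ℝ, InD g ∧
          cminus p = g * cD (2 * p) k l * g⁻¹) ∧
      (¬ ∃ g : Matrix (Fin (2 * p)) (Fin (2 * p)) ℝ, InD g ∧
          cplus p = g * cD (2 * p) k l * g⁻¹)) := by
  classical
  have hlast : (2 * p - 1) < 2 * p := by omega
  constructor
  · -- c₋ not conjugate to c₊ in D
    rintro ⟨g, ⟨hsp, hcard⟩, hconj⟩
    obtain ⟨σ, ε, hε, hg⟩ := signedPerm_struct hsp
    have h1 : g * g.transpose = 1 := mul_transpose_one σ ε hε hg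
    rw [Matrix.inv_eq_right_inv h1] at hconj
    have hprod1 : ∏ j, ε j = 1 := parity_lemma σ ε hε hg hcard
    -- pair relation
    have hpair : ∀ t : ℕ, ∀ ht : t < p,
        ε ⟨2 * t, by omega⟩ * ε ⟨2 * t + 1, by omega⟩ = if t + 1 < p then 1 else -1 := by
      intro t ht
      set b : Fin (2 * p) := ⟨2 * t, by omega⟩
      set a : Fin (2 * p) := ⟨2 * t + 1, by omega⟩
      have key := conj_entry σ ε hg hconj a b
      have hab : cplus p a b = if t + 1 < p then (1:ℝ) else -1 := by
        show (if (b : ℕ) < 2 * p - 2 then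
            (if (a : ℕ) = (if (b : ℕ) % 2 = 0 then (b : ℕ) + 1 else (b : ℕ) - 1) then (1:ℝ) else 0)
          else (if (a : ℕ) = (if (b : ℕ) = 2 * p - 2 then 2 * p - 1 else 2 * p - 2) then -1
            else 0)) = if t + 1 < p then (1:ℝ) else -1
        rw [show ((a : ℕ)) = 2 * t + 1 from rfl, show ((b : ℕ)) = 2 * t from rfl]
        by_cases hc2 : t + 1 < p
        · have h2 : 2 * t < 2 * p - 2 := by omega
          have h3 : 2 * t % 2 = 0 := by omega
          rw [if_pos hc2, if_pos h2, h3, if_pos rfl, if_pos rfl]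
        · have h2 : ¬ (2 * t < 2 * p - 2) := by omega
          have h4 : 2 * t = 2 * p - 2 := by omega
          rw [if_neg hc2, if_neg h2, if_pos h4, if_pos (show 2 * t + 1 = 2 * p - 1 by omega)]
      rw [hab] at key
      have h01 := cminus_zero_or_one p (σ a) (σ b)
      set η := (if t + 1 < p then (1:ℝ) else -1) with hηdef
      have hη : η = 1 ∨ η = -1 := by
        rw [hηdef]; split
        · exact Or.inl rfl
        · exact Or.inr rfl
      have hsq : η * η = 1 := by rcases hη with h | h <;> rw [h] <;> norm_num
      have hεab : ε a * ε b = 1 ∨ ε a * ε b = -1 := by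
        rcases hε a with ha | ha <;> rcases hε b with hb | hb <;> rw [ha, hb] <;> norm_num
      have hone : ε a * ε b * η = 1 := by
        rcases h01 with h0 | h0 <;> rw [h0] at key
        · exfalso
          rcases hεab with h | h <;> rcases hη with h' | h' <;> rw [h, h'] at key <;>
            norm_num at key
        · exact key.symm
      rw [mul_comm (ε b) (ε a)]
      calc ε a * ε b = ε a * ε b * (η * η) := by rw [hsq, mul_one]
        _ = (ε a * ε b * η) * η := by ring
        _ = η := by rw [hone, one_mul]
    -- now take the product over all pairs
    set F : ℕ → ℝ := fun n => if h : n < 2 * p then ε ⟨n, h⟩ else 1 with hF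
    have h2 : ∏ j : Fin (2 * p), ε j = ∏ j ∈ Finset.range (2 * p), F j := by
      rw [← Fin.prod_univ_eq_prod_range]
      refine Finset.prod_congr rfl fun j _ => ?_
      simp only [hF]
      rw [dif_pos j.isLt]
    have h3 := prod_range_two_mul F p
    have h4 : ∀ t ∈ Finset.range p, F (2 * t) * F (2 * t + 1) =
        if t + 1 < p then (1:ℝ) else -1 := by
      intro t ht'
      have ht : t < p := Finset.mem_range.mp ht'
      simp only [hF]
      rw [dif_pos (show 2 * t < 2 * p by omega), dif_pos (show 2 * t + 1 < 2 * p by omega)]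
      exact hpair t ht
    have h5 : ∏ t ∈ Finset.range p, (if t + 1 < p then (1:ℝ) else -1) = -1 := by
      obtain ⟨q, rfl⟩ : ∃ q, p = q + 1 := ⟨p - 1, by omega⟩
      rw [Finset.prod_range_succ, if_neg (by omega), Finset.prod_eq_one, one_mul]
      intro t ht'
      rw [if_pos (by have := Finset.mem_range.mp ht'; omega)]
    rw [h2, h3, Finset.prod_congr rfl h4, h5] at hprod1
    norm_num at hprod1
  · intro k l hkl
    have hd : cD (2 * p) k l ⟨2 * p - 1, hlast⟩ ⟨2 * p - 1, hlast⟩ ≠ 0 := by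
      show (if ((⟨2 * p - 1, hlast⟩ : Fin (2 * p)) : ℕ) < 2 * k then
          (if ((⟨2 * p - 1, hlast⟩ : Fin (2 * p)) : ℕ) = _ then (1:ℝ) else 0)
        else if (l % 2 = 1 ∧ 2 * p - l - 1 ≤ ((⟨2 * p - 1, hlast⟩ : Fin (2 * p)) : ℕ)) ∨
            (l % 2 = 0 ∧ 2 * p - l - 1 ≤ ((⟨2 * p - 1, hlast⟩ : Fin (2 * p)) : ℕ) ∧
              ((⟨2 * p - 1, hlast⟩ : Fin (2 * p)) : ℕ) < 2 * p - 1) then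
          (if (⟨2 * p - 1, hlast⟩ : Fin (2 * p)) = ⟨2 * p - 1, hlast⟩ then -1 else 0)
        else (if (⟨2 * p - 1, hlast⟩ : Fin (2 * p)) = ⟨2 * p - 1, hlast⟩ then 1 else 0)) ≠ 0
      rw [show (((⟨2 * p - 1, hlast⟩ : Fin (2 * p)) : ℕ)) = 2 * p - 1 from rfl]
      rw [if_neg (by omega)]
      by_cases hl : l % 2 = 1
      · rw [if_pos (Or.inl ⟨hl, by omega⟩), if_pos rfl]; norm_num
      · rw [if_neg, if_pos rfl]
        · norm_num
        · rintro (⟨h, -⟩ | ⟨-, -, h⟩)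
          · exact hl h
          · omega
    exact ⟨not_conj_of_diag (cminus_diag p) _ hd, not_conj_of_diag (cplus_diag p) _ hd⟩
end
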